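/- arXiv:2006.02966 — 13 statements merged into one kernel-verified Lean document; each statement's English description precedes it below -/
import Mathlib

section
/- Let n ≥ 2 be an integer. For every positive integer m, there exists a unique increasing sequence of positive integers (c_1, c_2, …, c_k) such that c_1 ≥ n, c_i ≥ c_{i-1} + n for i = 2, 3, …, k, and m = F_{n,c_1} + F_{n,c_2} + ⋯ + F_{n,c_k}. -/
/-!
Since `F (c + 1) = F c + F (c + 1 - n)`, the sums over index lists with gaps `≥ n` and largest
index at most `c` are exactly the numbers below `F (c + 1)`: such a sum is `F d` plus a sum
below `F (d + 1 - n)`, and conversely a number `m` with `F c ≤ m < F (c + 1)` is `F c` plus a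
number below `F (c + 1 - n)`. So the largest index of a representation of `m` is forced to be
the largest `c` with `F c ≤ m`; the greedy choice gives existence and, by induction, uniqueness.
-/

structure IsGenFibonacci (n : ℕ) (F : ℕ → ℕ) : Prop where
  eq_one : ∀ i, 1 ≤ i → i ≤ n → F i = 1
  add_one : ∀ m, n ≤ m → F (m + 1) = F m + F (m + 1 - n)

/-- Index lists of generalized Zeckendorf representations, written in *decreasing* order. -/
def IsAdmissible (n : ℕ) (L : List ℕ) : Prop :=
  (∀ c ∈ L, n ≤ c) ∧ L.Pairwise (fun a b => b + n ≤ a)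

namespace IsAdmissible

variable {n d : ℕ} {L : List ℕ}

theorem nil : IsAdmissible n [] := ⟨by simp, .nil⟩

theorem cons_iff :
    IsAdmissible n (d :: L) ↔ n ≤ d ∧ (∀ x ∈ L, x + n ≤ d) ∧ IsAdmissible n L := by
  simp only [IsAdmissible, List.mem_cons, forall_eq_or_imp, List.pairwise_cons]
  tauto

theorem reverse_iff :
    IsAdmissible n L ↔ (∀ c ∈ L.reverse, n ≤ c) ∧ L.reverse.IsChain (fun a b => a + n ≤ b) := by
  have : Trans (fun a b : ℕ => a + n ≤ b) (fun a b => a + n ≤ b) (fun a b => a + n ≤ b) :=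
    ⟨fun h₁ h₂ => by omega⟩
  rw [List.isChain_iff_pairwise, List.pairwise_reverse]
  simp only [IsAdmissible, List.mem_reverse]

end IsAdmissible

namespace IsGenFibonacci

variable {n : ℕ} {F : ℕ → ℕ}

theorem pos_of_le (hF : IsGenFibonacci n F) (hn : 0 < n) {i : ℕ} (hi : n ≤ i) : 0 < F i := by
  induction i, hi using Nat.le_induction with
  | base => rw [hF.eq_one n hn le_rfl]; exact one_pos
  | succ m hm ih => rw [hF.add_one m hm]; exact Nat.add_pos_left ih _

theorem pos (hF : IsGenFibonacci n F) (hn : 0 < n) {i : ℕ} (hi : 0 < i) : 0 < F i := by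
  rcases le_or_gt i n with hin | hni
  · rw [hF.eq_one i hi hin]; exact one_pos
  · exact hF.pos_of_le hn hni.le

theorem lt_add_one (hF : IsGenFibonacci n F) (hn : 0 < n) {m : ℕ} (hm : n ≤ m) :
    F m < F (m + 1) := by
  rw [hF.add_one m hm]
  exact Nat.lt_add_of_pos_right (hF.pos hn (by omega))

theorem strictMonoOn (hF : IsGenFibonacci n F) (hn : 0 < n) : StrictMonoOn F (Set.Ici n) :=
  fun _ ha _ _ hab => Nat.rel_of_forall_rel_succ_of_le_of_lt (· < ·) (f := F)
    (fun _ hm => hF.lt_add_one hn hm) ha hab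

theorem le_apply_add (hF : IsGenFibonacci n F) (hn : 0 < n) (k : ℕ) : k ≤ F (n + k) :=
  (strictMono_nat_of_lt_succ (f := fun k => F (n + k)) fun k =>
    hF.lt_add_one hn (Nat.le_add_right n k)).le_apply

theorem sum_lt (hF : IsGenFibonacci n F) (hn : 0 < n) {L : List ℕ} (hL : IsAdmissible n L)
    {c : ℕ} (hc : ∀ x ∈ L, x ≤ c) : (L.map F).sum < F (c + 1) := by
  induction L generalizing c with
  | nil => simpa using hF.pos hn c.succ_pos
  | cons d L ih =>
    obtain ⟨hnd, hgap, hL⟩ := IsAdmissible.cons_iff.mp hL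
    have hdc := hc d List.mem_cons_self
    have htail : (L.map F).sum < F (d + 1 - n) := by
      rw [show d + 1 - n = d - n + 1 by omega]
      exact ih hL fun x hx => by have := hgap x hx; omega
    calc ((d :: L).map F).sum = F d + (L.map F).sum := by simp
      _ < F d + F (d + 1 - n) := by gcongr
      _ = F (d + 1) := (hF.add_one d hnd).symm
      _ ≤ F (c + 1) := (hF.strictMonoOn hn).monotoneOn
        (Set.mem_Ici.mpr (by omega)) (Set.mem_Ici.mpr (by omega)) (by omega)

theorem exists_sum_eq_of_lt (hF : IsGenFibonacci n F) (hn : 0 < n) (c : ℕ) {m : ℕ}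
    (hm : m < F (c + 1)) : ∃ L, IsAdmissible n L ∧ (∀ x ∈ L, x ≤ c) ∧ (L.map F).sum = m := by
  induction c using Nat.strong_induction_on generalizing m with
  | _ c ih =>
  rcases lt_or_ge c n with hcn | hnc
  · obtain rfl : m = 0 := by rw [hF.eq_one (c + 1) (by omega) hcn] at hm; omega
    exact ⟨[], .nil, by simp, by simp⟩
  rcases lt_or_ge m (F c) with hmc | hcm
  · obtain ⟨L, hL, hLc, hsum⟩ := ih (c - 1) (by omega) (by rwa [Nat.sub_add_cancel (by omega)])
    exact ⟨L, hL, fun x hx => (hLc x hx).trans (Nat.sub_le c 1), hsum⟩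
  · have hrest : m - F c < F (c - n + 1) := by
      rw [hF.add_one c hnc] at hm
      rw [show c - n + 1 = c + 1 - n by omega]
      omega
    obtain ⟨L, hL, hLc, hsum⟩ := ih (c - n) (by omega) hrest
    refine ⟨c :: L, IsAdmissible.cons_iff.mpr ⟨hnc, fun x hx => ?_, hL⟩, ?_, ?_⟩
    · have := hLc x hx; omega
    · simpa using fun x hx => (hLc x hx).trans (Nat.sub_le c n)
    · simp [hsum, hcm]

theorem exists_sum_eq (hF : IsGenFibonacci n F) (hn : 0 < n) (m : ℕ) :
    ∃ L, IsAdmissible n L ∧ (L.map F).sum = m :=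
  have ⟨L, hL, _, hsum⟩ := hF.exists_sum_eq_of_lt hn (n + m)
    (Nat.lt_of_succ_le (hF.le_apply_add hn (m + 1)))
  ⟨L, hL, hsum⟩

theorem sum_cons_lt (hF : IsGenFibonacci n F) (hn : 0 < n) {d : ℕ} {L : List ℕ}
    (hL : IsAdmissible n (d :: L)) : ((d :: L).map F).sum < F (d + 1) := by
  refine hF.sum_lt hn hL fun x hx => ?_
  rcases List.mem_cons.mp hx with rfl | hx
  · rfl
  · have := (IsAdmissible.cons_iff.mp hL).2.1 x hx; omega

theorem le_of_le_sum (hF : IsGenFibonacci n F) (hn : 0 < n) {d e : ℕ} {L : List ℕ}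
    (hL : IsAdmissible n (d :: L)) (he : F e ≤ ((d :: L).map F).sum) : e ≤ d := by
  by_contra! hde
  have hnd := (IsAdmissible.cons_iff.mp hL).1
  have : F (d + 1) ≤ F e :=
    (hF.strictMonoOn hn).monotoneOn (Set.mem_Ici.mpr (by omega)) (Set.mem_Ici.mpr (by omega)) hde
  exact (hF.sum_cons_lt hn hL).not_ge (this.trans he)

theorem eq_of_sum_eq (hF : IsGenFibonacci n F) (hn : 0 < n) {L₁ L₂ : List ℕ}
    (h₁ : IsAdmissible n L₁) (h₂ : IsAdmissible n L₂)
    (h : (L₁.map F).sum = (L₂.map F).sum) : L₁ = L₂ := by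
  induction L₁ generalizing L₂ with
  | nil =>
    cases L₂ with
    | nil => rfl
    | cons d L =>
      have := hF.pos_of_le hn (IsAdmissible.cons_iff.mp h₂).1
      simp only [List.map_nil, List.map_cons, List.sum_nil, List.sum_cons] at h; omega
  | cons d₁ L₁ ih =>
    cases L₂ with
    | nil =>
      have := hF.pos_of_le hn (IsAdmissible.cons_iff.mp h₁).1
      simp only [List.map_nil, List.map_cons, List.sum_nil, List.sum_cons] at h; omega
    | cons d₂ L₂ =>
      obtain rfl : d₁ = d₂ := le_antisymm
        (hF.le_of_le_sum hn h₂ (by rw [← h]; simp)) (hF.le_of_le_sum hn h₁ (by rw [h]; simp))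
      simp only [List.map_cons, List.sum_cons, add_right_inj] at h
      rw [ih (IsAdmissible.cons_iff.mp h₁).2.2 (IsAdmissible.cons_iff.mp h₂).2.2 h]

end IsGenFibonacci

theorem generalized_zeckendorf_general (n : ℕ) (hn : 2 ≤ n) (F : ℕ → ℕ)
    (hF1 : ∀ i, 1 ≤ i → i ≤ n → F i = 1)
    (hFrec : ∀ m, n ≤ m → F (m + 1) = F m + F (m + 1 - n))
    (m : ℕ) :
    ∃! L : List ℕ, (∀ c ∈ L, n ≤ c) ∧
      L.Chain' (fun a b => a + n ≤ b) ∧ (L.map F).sum = m := by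
  have hF : IsGenFibonacci n F := ⟨hF1, hFrec⟩
  have hn₀ : 0 < n := by omega
  obtain ⟨L, hL, hsum⟩ := hF.exists_sum_eq hn₀ m
  refine ⟨L.reverse, ⟨(IsAdmissible.reverse_iff.mp hL).1, (IsAdmissible.reverse_iff.mp hL).2,
    by rwa [List.map_reverse, List.sum_reverse]⟩, ?_⟩
  rintro M ⟨hMn, hMchain, hMsum⟩
  have hM : IsAdmissible n M.reverse :=
    IsAdmissible.reverse_iff.mpr (by rw [List.reverse_reverse]; exact ⟨hMn, hMchain⟩)
  rw [← List.reverse_reverse M, hF.eq_of_sum_eq hn₀ hM hL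
    (by rw [List.map_reverse, List.sum_reverse, hMsum, hsum])]

/-- For an integer `n ≥ 2`, `F` is the generalized Fibonacci sequence:
`F 1 = ⋯ = F n = 1` and `F (m+1) = F m + F (m+1-n)` for `m ≥ n`.
Every positive integer has a unique representation as a sum of `F`-terms
whose indices are at least `n` and pairwise at least `n` apart
(encoded as an increasing list of indices with consecutive gaps `≥ n`). -/
theorem generalized_zeckendorf (n : ℕ) (hn : 2 ≤ n) (F : ℕ → ℕ)
    (hF1 : ∀ i, 1 ≤ i → i ≤ n → F i = 1)
    (hFrec : ∀ m, n ≤ m → F (m + 1) = F m + F (m + 1 - n))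
    (m : ℕ) (hm : 1 ≤ m) :
    ∃! L : List ℕ, (∀ c ∈ L, n ≤ c) ∧
      L.Chain' (fun a b => a + n ≤ b) ∧ (L.map F).sum = m :=
  generalized_zeckendorf_general n hn F hF1 hFrec m
end

section
/- Let n ≥ 3 and m ≥ 1. The string S_m contains exactly F_{n,m} letters, of which exactly F_{n,m-(n-1)} are occurrences of a_n, and, for each 1 ≤ i ≤ n-1, exactly F_{n,m-(n+i-1)} are occurrences of a_i (so F_{n,m-n} are a_1's, F_{n,m-(n+1)} are a_2's, …, F_{n,m-(2n-2)} are a_{n-1}'s). -/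
/-- Let `n ≥ 3` and `m ≥ 1`.  Here `F : ℤ → ℤ` is the generalized Fibonacci
sequence extended to all integer indices (`F i = 1` for `1 ≤ i ≤ n` and
`F (m+1) = F m + F (m+1-n)` for every integer `m`), and `S` is the `n`-string
sequence over the alphabet `{1, …, n}` (letter `a_i` is encoded as `i`);
`S i = [i]` for `1 ≤ i ≤ n` and `S (m+1) = S m ++ S (m+1-n)` for `m ≥ n`.
Then `S m` has `F m` letters, of which `F (m - (n-1))` are `a_n`'s and,
for `1 ≤ i ≤ n-1`, exactly `F (m - (n+i-1))` are `a_i`'s. -/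
theorem nString_letter_counts (n : ℕ) (hn : 3 ≤ n) (F : ℤ → ℤ)
    (hF1 : ∀ i : ℤ, 1 ≤ i → i ≤ (n : ℤ) → F i = 1)
    (hFrec : ∀ m : ℤ, F (m + 1) = F m + F (m + 1 - n))
    (S : ℕ → List ℕ)
    (hS1 : ∀ i, 1 ≤ i → i ≤ n → S i = [i])
    (hSrec : ∀ m, n ≤ m → S (m + 1) = S m ++ S (m + 1 - n))
    (m : ℕ) (hm : 1 ≤ m) :
    ((S m).length : ℤ) = F m ∧
    ((S m).count n : ℤ) = F ((m : ℤ) - ((n : ℤ) - 1)) ∧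
    ∀ i, 1 ≤ i → i ≤ n - 1 →
      ((S m).count i : ℤ) = F ((m : ℤ) - ((n : ℤ) + (i : ℤ) - 1)) := by
  have hn' : (3:ℤ) ≤ (n:ℤ) := by exact_mod_cast hn
  have hFzero : ∀ i : ℤ, 2 - n ≤ i → i ≤ 0 → F i = 0 := by
    intro i h1 h2
    have h := hFrec (i + n - 1)
    rw [show (i + (n:ℤ) - 1) + 1 = i + n by ring] at h
    rw [show i + (n:ℤ) - (n:ℤ) = i by ring] at h
    rw [hF1 (i + n) (by linarith) (by linarith),
        hF1 (i + n - 1) (by linarith) (by linarith)] at h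
    linarith
  have hFone : F (1 - n) = 1 := by
    have h := hFrec 0
    rw [show (0:ℤ) + 1 = 1 by ring] at h
    rw [hF1 1 le_rfl (by linarith), hFzero 0 (by linarith) le_rfl] at h
    linarith
  have hFzero2 : ∀ i : ℤ, 3 - 2*n ≤ i → i ≤ -n → F i = 0 := by
    intro i h1 h2
    have h := hFrec (i + n - 1)
    rw [show (i + (n:ℤ) - 1) + 1 = i + n by ring] at h
    rw [show i + (n:ℤ) - (n:ℤ) = i by ring] at h
    rw [hFzero (i + n) (by linarith) (by linarith),
        hFzero (i + n - 1) (by linarith) (by linarith)] at h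
    linarith
  have key : ∀ m : ℕ, 1 ≤ m →
      ((S m).length : ℤ) = F m ∧
      ((S m).count n : ℤ) = F ((m : ℤ) - ((n : ℤ) - 1)) ∧
      ∀ i, 1 ≤ i → i ≤ n - 1 →
        ((S m).count i : ℤ) = F ((m : ℤ) - ((n : ℤ) + (i : ℤ) - 1)) := by
    intro m
    induction m using Nat.strong_induction_on with
    | _ m IH =>
    intro hm
    rcases le_or_gt m n with hle | hgt
    · -- base case: S m = [m]
      have hSm : S m = [m] := hS1 m hm hle
      have hm' : (1:ℤ) ≤ (m:ℤ) := by exact_mod_cast hm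
      have hle' : (m:ℤ) ≤ (n:ℤ) := by exact_mod_cast hle
      refine ⟨?_, ?_, ?_⟩
      · rw [hSm]
        simp only [List.length_singleton, Nat.cast_one]
        exact (hF1 m hm' hle').symm
      · rw [hSm]
        rcases eq_or_ne m n with rfl | hne
        · rw [List.count_singleton]
          rw [show (m:ℤ) - ((m:ℤ) - 1) = 1 by ring, hF1 1 le_rfl (by linarith)]
          norm_num
        · rw [List.count_singleton']
          rw [if_neg hne]
          have hne' : (m:ℤ) ≠ (n:ℤ) := by exact_mod_cast hne
          rw [hFzero ((m:ℤ) - ((n:ℤ) - 1)) (by omega) (by omega)]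
          norm_num
      · intro i hi1 hi2
        rw [hSm]
        have hi1' : (1:ℤ) ≤ (i:ℤ) := by exact_mod_cast hi1
        have hi2' : (i:ℤ) ≤ (n:ℤ) - 1 := by
          have : (i:ℤ) ≤ ((n-1:ℕ):ℤ) := by exact_mod_cast hi2
          omega
        rcases eq_or_ne m i with rfl | hne
        · rw [List.count_singleton]
          rw [show (m:ℤ) - ((n:ℤ) + (m:ℤ) - 1) = 1 - n by ring, hFone]
          norm_num
        · rw [List.count_singleton']
          rw [if_neg hne]
          have hne' : (m:ℤ) ≠ (i:ℤ) := by exact_mod_cast hne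
          rcases lt_or_gt_of_ne hne' with h | h
          · rw [hFzero2 ((m:ℤ) - ((n:ℤ) + (i:ℤ) - 1)) (by omega) (by omega)]
            norm_num
          · rw [hFzero ((m:ℤ) - ((n:ℤ) + (i:ℤ) - 1)) (by omega) (by omega)]
            norm_num
    · -- inductive step
      have hrec := hSrec (m - 1) (by omega)
      rw [show m - 1 + 1 = m by omega] at hrec
      obtain ⟨L1, C1, A1⟩ := IH (m - 1) (by omega) (by omega)
      obtain ⟨L2, C2, A2⟩ := IH (m - n) (by omega) (by omega)
      have c1 : ((m - 1 : ℕ) : ℤ) = (m:ℤ) - 1 := by omega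
      have c2 : ((m - n : ℕ) : ℤ) = (m:ℤ) - (n:ℤ) := by omega
      rw [c1] at L1 C1
      rw [c2] at L2 C2
      refine ⟨?_, ?_, ?_⟩
      · rw [hrec, List.length_append]
        push_cast
        rw [L1, L2]
        have h := hFrec ((m:ℤ) - 1)
        have e0 : F ((m:ℤ) - 1 + 1) = F (m:ℤ) := congrArg F (by ring)
        have e1 : F ((m:ℤ) - 1 + 1 - (n:ℤ)) = F ((m:ℤ) - (n:ℤ)) := congrArg F (by ring)
        linarith
      · rw [hrec, List.count_append]
        push_cast
        rw [C1, C2]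
        have h := hFrec ((m:ℤ) - (n:ℤ))
        have e0 : F ((m:ℤ) - (n:ℤ) + 1) = F ((m:ℤ) - ((n:ℤ) - 1)) := congrArg F (by ring)
        have e1 : F ((m:ℤ) - (n:ℤ) + 1 - (n:ℤ)) = F ((m:ℤ) - (n:ℤ) - ((n:ℤ) - 1)) := congrArg F (by ring)
        have e2 : F ((m:ℤ) - (n:ℤ)) = F ((m:ℤ) - 1 - ((n:ℤ) - 1)) := congrArg F (by ring)
        linarith
      · intro i hi1 hi2
        have A1' := A1 i hi1 hi2
        have A2' := A2 i hi1 hi2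
        rw [c1] at A1'
        rw [c2] at A2'
        rw [hrec, List.count_append]
        push_cast
        rw [A1', A2']
        have h := hFrec ((m:ℤ) - (n:ℤ) - (i:ℤ))
        have e0 : F ((m:ℤ) - (n:ℤ) - (i:ℤ) + 1) = F ((m:ℤ) - ((n:ℤ) + (i:ℤ) - 1)) := congrArg F (by ring)
        have e1 : F ((m:ℤ) - (n:ℤ) - (i:ℤ) + 1 - (n:ℤ)) = F ((m:ℤ) - (n:ℤ) - ((n:ℤ) + (i:ℤ) - 1)) := congrArg F (by ring)
        have e2 : F ((m:ℤ) - (n:ℤ) - (i:ℤ)) = F ((m:ℤ) - 1 - ((n:ℤ) + (i:ℤ) - 1)) := congrArg F (by ring)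
        linarith
  exact key m hm
end

section
/- Let n ≥ 3 and m ≥ 1. The concatenation S_{n+(n-1)m} ∘ S_{n+(n-1)(m-1)} ∘ ⋯ ∘ S_{n+(n-1)} ∘ S_n gives the first F_{n,n} + F_{n,2n-1} + F_{n,3n-2} + ⋯ + F_{n,(m+1)n-m} letters of S_∞; that is, this concatenation is a prefix of S_∞. -/
private lemma pre_append {α : Type*} {a x y : List α} (h : x <+: y) :
    a ++ x <+: a ++ y := by
  obtain ⟨t, rfl⟩ := h
  exact ⟨t, List.append_assoc _ _ _⟩

private lemma S_mono (n : ℕ) (hn : 3 ≤ n) (S : ℕ → List ℕ)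
    (hSrec : ∀ m, n ≤ m → S (m + 1) = S m ++ S (m + 1 - n))
    {a b : ℕ} (ha : n ≤ a) (hab : a ≤ b) : S a <+: S b := by
  induction b with
  | zero => omega
  | succ b ih =>
    rcases eq_or_lt_of_le hab with h | h
    · rw [h]
    · exact (ih (by omega)).trans
        (by rw [hSrec b (by omega)]; exact List.prefix_append _ _)

private lemma S_expand (n : ℕ) (hn : 3 ≤ n) (S : ℕ → List ℕ)
    (hSrec : ∀ m, n ≤ m → S (m + 1) = S m ++ S (m + 1 - n))
    (k : ℕ) (hk : n ≤ k) (j : ℕ) :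
    S (k + j) = S k ++ ((List.range j).map (fun i => S (k + 1 + i - n))).flatten := by
  induction j with
  | zero => simp
  | succ j ih =>
    rw [show k + (j+1) = (k + j) + 1 from rfl, hSrec _ (by omega), ih,
      List.range_succ, List.map_append, List.flatten_append]
    simp only [List.map_cons, List.map_nil, List.flatten_cons, List.flatten_nil,
      List.append_nil, List.append_assoc]
    congr 3
    omega

private lemma T_succ (n : ℕ) (S : ℕ → List ℕ) (m : ℕ) :
    ((List.range (m + 2)).reverse.map (fun t => S (n + (n - 1) * t))).flatten
      = S (n + (n - 1) * (m + 1)) ++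
        ((List.range (m + 1)).reverse.map (fun t => S (n + (n - 1) * t))).flatten := by
  rw [List.range_succ]
  simp

private lemma range_cons2 (n : ℕ) (hn : 2 ≤ n) :
    List.range n = 0 :: 1 :: ((List.range (n-2)).map (· + 2)) := by
  obtain ⟨r, rfl⟩ : ∃ r, n = r + 2 := ⟨n-2, by omega⟩
  simp only [List.range_succ_eq_map, List.map_map, List.map_cons, Nat.add_sub_cancel]
  rfl

private lemma T_prefix (n : ℕ) (hn : 3 ≤ n) (S : ℕ → List ℕ)
    (hSrec : ∀ m, n ≤ m → S (m + 1) = S m ++ S (m + 1 - n)) (m : ℕ) :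
    ((List.range (m + 1)).reverse.map (fun t => S (n + (n - 1) * t))).flatten
      <+: S (n + (n - 1) * m + n) := by
  have T0 : ((List.range 1).reverse.map (fun t => S (n + (n - 1) * t))).flatten = S n := by
    simp [List.range_succ]
  induction m using Nat.strong_induction_on with
  | _ m ih =>
    match m with
    | 0 =>
      rw [T0]
      exact S_mono n hn S hSrec le_rfl (by omega)
    | 1 =>
      rw [T_succ, S_expand n hn S hSrec (n + (n-1) * 1) (by omega) n,
        range_cons2 n (by omega), List.map_cons, List.flatten_cons,
        show n + (n-1) * 1 + 1 + 0 - n = n by omega, T0]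
      exact pre_append (List.prefix_append _ _)
    | (m + 2) =>
      rw [T_succ, T_succ, S_expand n hn S hSrec (n + (n-1) * (m+2)) (by omega) n,
        range_cons2 n (by omega), List.map_cons, List.map_cons,
        List.flatten_cons, List.flatten_cons,
        show n + (n-1) * (m+2) + 1 + 0 - n = n + (n-1) * (m+1) by
          have : (n-1) * (m+2) = (n-1)*(m+1) + (n-1) := by ring
          omega,
        show n + (n-1) * (m+2) + 1 + 1 - n = n + (n-1) * m + n by
          have : (n-1) * (m+2) = (n-1)*m + (n-1) + (n-1) := by ring
          omega]
      exact pre_append (pre_append ((ih m (by omega)).trans (List.prefix_append _ _)))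

private lemma S_length (n : ℕ) (hn : 3 ≤ n) (F : ℕ → ℕ)
    (hF1 : ∀ i, 1 ≤ i → i ≤ n → F i = 1)
    (hFrec : ∀ m, n ≤ m → F (m + 1) = F m + F (m + 1 - n))
    (S : ℕ → List ℕ)
    (hS1 : ∀ i, 1 ≤ i → i ≤ n → S i = [i])
    (hSrec : ∀ m, n ≤ m → S (m + 1) = S m ++ S (m + 1 - n))
    (j : ℕ) (hj : 1 ≤ j) : (S j).length = F j := by
  induction j using Nat.strong_induction_on with
  | _ j ih =>
    rcases le_or_gt j n with h | h
    · rw [hS1 j hj h, hF1 j hj h, List.length_singleton]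
    · obtain ⟨p, rfl⟩ : ∃ p, j = p + 1 := ⟨j - 1, by omega⟩
      rw [hSrec p (by omega), List.length_append, hFrec p (by omega),
        ih p (by omega) (by omega), ih (p + 1 - n) (by omega) (by omega)]

private lemma T_length (n : ℕ) (hn : 3 ≤ n) (F : ℕ → ℕ)
    (hF1 : ∀ i, 1 ≤ i → i ≤ n → F i = 1)
    (hFrec : ∀ m, n ≤ m → F (m + 1) = F m + F (m + 1 - n))
    (S : ℕ → List ℕ)
    (hS1 : ∀ i, 1 ≤ i → i ≤ n → S i = [i])
    (hSrec : ∀ m, n ≤ m → S (m + 1) = S m ++ S (m + 1 - n))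
    (m : ℕ) :
    (((List.range (m + 1)).reverse.map (fun t => S (n + (n - 1) * t))).flatten).length
      = ∑ t ∈ Finset.range (m + 1), F (n + (n - 1) * t) := by
  induction m with
  | zero =>
    have h0 : ((List.range 1).reverse.map (fun t => S (n + (n - 1) * t))).flatten
        = S (n + (n - 1) * 0) := by simp [List.range_succ]
    rw [h0, Finset.sum_range_one, S_length n hn F hF1 hFrec S hS1 hSrec _ (by omega)]
  | succ m ihm =>
    rw [T_succ, List.length_append, ihm,
      S_length n hn F hF1 hFrec S hS1 hSrec _ (by omega),
      Finset.sum_range_succ _ (m + 1), Nat.add_comm]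


/-- Let `n ≥ 3`, `m ≥ 1`.  `F` is the generalized Fibonacci sequence, `S` the
`n`-string sequence (letter `a_i` encoded as `i : ℕ`), and `W : ℕ → ℕ` the
infinite `n`-string `S_∞` (each `S m`, `m ≥ n`, is a prefix of `W`, expressed
as `S m = (List.range (S m).length).map W`).  The concatenation
`S (n+(n-1)m) ∘ ⋯ ∘ S (n+(n-1)) ∘ S n` gives the first
`F n + F (2n-1) + ⋯ + F ((m+1)n - m)` letters of `S_∞`
(note `(t+1)n - t = n + (n-1)t`). -/
theorem concat_prefix_of_nString (n : ℕ) (hn : 3 ≤ n) (F : ℕ → ℕ)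
    (hF1 : ∀ i, 1 ≤ i → i ≤ n → F i = 1)
    (hFrec : ∀ m, n ≤ m → F (m + 1) = F m + F (m + 1 - n))
    (S : ℕ → List ℕ)
    (hS1 : ∀ i, 1 ≤ i → i ≤ n → S i = [i])
    (hSrec : ∀ m, n ≤ m → S (m + 1) = S m ++ S (m + 1 - n))
    (W : ℕ → ℕ)
    (hW : ∀ m, n ≤ m → S m = (List.range (S m).length).map W)
    (m : ℕ) (hm : 1 ≤ m) :
    ((List.range (m + 1)).reverse.map (fun t => S (n + (n - 1) * t))).flatten
      = (List.range (∑ t ∈ Finset.range (m + 1), F (n + (n - 1) * t))).map W := by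
  have hpre := T_prefix n hn S hSrec m
  have hN : n ≤ n + (n - 1) * m + n := by omega
  have hlen := hpre.length_le
  have hTlen := T_length n hn F hF1 hFrec S hS1 hSrec m
  have h1 := List.prefix_iff_eq_take.mp hpre
  rw [h1, hW _ hN, ← List.map_take, List.take_range, Nat.min_eq_left hlen, hTlen]
end

section
/- Let n ≥ 3 and let m be a positive integer with n-decomposition m = F_{n,c_1} + F_{n,c_2} + ⋯ + F_{n,c_k} (so c_1 ≥ n and c_i ≥ c_{i-1} + n for i = 2, …, k). Then the concatenation S_{c_k} ∘ S_{c_{k-1}} ∘ ⋯ ∘ S_{c_1} equals the string formed by the first m letters of S_∞. -/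
/-!
The recurrence `S (m + 1) = S m ++ S (m + 1 - n)` makes every `S a` with `a ≥ n` a prefix of all
later `S b`, and gives `|S c| = F c`. For a decomposition listed in decreasing order
`c_k > ⋯ > c_1`, the gap condition `c_{i-1} + 1 ≤ c_i + 1 - n` lets one show inductively that
`S c_i ∘ ⋯ ∘ S c_1` is a prefix of `S (c_i + 1) = S c_i ∘ S (c_i + 1 - n)`. Hence the whole
concatenation is a prefix of some `S b`, hence of `S_∞`, and its length is `∑ F c_i = m`.
-/

namespace NString

variable {α : Type*} {n : ℕ} {S : ℕ → List α}

theorem prefix_of_le (hSrec : ∀ m, n ≤ m → S (m + 1) = S m ++ S (m + 1 - n))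
    {a b : ℕ} (ha : n ≤ a) (hab : a ≤ b) : S a <+: S b := by
  induction b, hab using Nat.le_induction with
  | base => exact List.prefix_refl _
  | succ b hb ih =>
    rw [hSrec b (ha.trans hb)]
    exact ih.trans (List.prefix_append _ _)

theorem length_eq (hn : 1 ≤ n) (F : ℕ → ℕ)
    (hF1 : ∀ i, 1 ≤ i → i ≤ n → F i = 1)
    (hFrec : ∀ m, n ≤ m → F (m + 1) = F m + F (m + 1 - n))
    (hS1 : ∀ i, 1 ≤ i → i ≤ n → (S i).length = 1)
    (hSrec : ∀ m, n ≤ m → S (m + 1) = S m ++ S (m + 1 - n)) :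
    ∀ c, 1 ≤ c → (S c).length = F c := by
  intro c
  induction c using Nat.strong_induction_on with
  | _ c ih =>
    intro hc
    rcases le_or_gt c n with hcn | hnc
    · rw [hS1 c hc hcn, hF1 c hc hcn]
    · obtain ⟨b, rfl⟩ : ∃ b, c = b + 1 := ⟨c - 1, by omega⟩
      have hb : n ≤ b := by omega
      rw [hSrec b hb, hFrec b hb, List.length_append,
        ih b (by omega) (by omega), ih (b + 1 - n) (by omega) (by omega)]

theorem flatten_map_prefix (hSrec : ∀ m, n ≤ m → S (m + 1) = S m ++ S (m + 1 - n)) :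
    ∀ (a : ℕ) (M : List ℕ), (∀ c ∈ a :: M, n ≤ c) →
      (a :: M).IsChain (fun x y => y + n ≤ x) → ((a :: M).map S).flatten <+: S (a + 1)
  | a, [], hge, _ => by
    simp [hSrec a (hge a (by simp))]
  | a, b :: M, hge, hchain => by
    obtain ⟨hba, hchain'⟩ := List.isChain_cons_cons.mp hchain
    have htail : ((b :: M).map S).flatten <+: S (b + 1) :=
      flatten_map_prefix hSrec b M (fun c hc => hge c (List.mem_cons_of_mem _ hc)) hchain'
    have hb : n ≤ b := hge b (by simp)
    have hS : S (b + 1) <+: S (a + 1 - n) := prefix_of_le hSrec (by omega) (by omega)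
    rw [List.map_cons, List.flatten_cons, hSrec a (hge a (by simp))]
    exact (List.prefix_append_right_inj (S a)).mpr (htail.trans hS)

end NString

theorem List.eq_map_range_of_prefix {α : Type*} {W : ℕ → α} {l : List α} {k : ℕ}
    (h : l <+: (List.range k).map W) : l = (List.range l.length).map W := by
  conv_lhs => rw [List.prefix_iff_eq_take.mp h]
  rw [← List.map_take, List.take_range, min_eq_left (h.length_le.trans_eq (by simp))]

theorem decomposition_gives_prefix_general (n : ℕ) (hn : 3 ≤ n) (F : ℕ → ℕ)
    (hF1 : ∀ i, 1 ≤ i → i ≤ n → F i = 1)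
    (hFrec : ∀ m, n ≤ m → F (m + 1) = F m + F (m + 1 - n))
    (S : ℕ → List ℕ)
    (hS1 : ∀ i, 1 ≤ i → i ≤ n → S i = [i])
    (hSrec : ∀ m, n ≤ m → S (m + 1) = S m ++ S (m + 1 - n))
    (W : ℕ → ℕ)
    (hW : ∀ m, n ≤ m → S m = (List.range (S m).length).map W)
    (m : ℕ) (L : List ℕ)
    (hLn : ∀ c ∈ L, n ≤ c)
    (hLgap : L.Chain' (fun a b => a + n ≤ b))
    (hLsum : (L.map F).sum = m) :
    (L.reverse.map S).flatten = (List.range m).map W := by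
  have hlen : ∀ c ∈ L, (S c).length = F c := fun c hc =>
    NString.length_eq (by omega) F hF1 hFrec (fun i h1 h2 => by simp [hS1 i h1 h2]) hSrec c
      (by have := hLn c hc; omega)
  have hlength : (L.reverse.map S).flatten.length = m := by
    rw [List.length_flatten, List.map_reverse, List.map_reverse, List.sum_reverse, List.map_map,
      ← hLsum]
    exact congrArg List.sum (List.map_congr_left hlen)
  rw [← hlength]
  rcases hrev : L.reverse with _ | ⟨a, M⟩
  · rfl
  · have hge : ∀ c ∈ a :: M, n ≤ c := fun c hc => hLn c (List.mem_reverse.mp (hrev ▸ hc))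
    have hchain : (a :: M).IsChain (fun x y => y + n ≤ x) :=
      hrev ▸ List.isChain_reverse.mpr hLgap
    have hpre := NString.flatten_map_prefix hSrec a M hge hchain
    rw [hW (a + 1) (by have := hge a (by simp); omega)] at hpre
    exact List.eq_map_range_of_prefix hpre

/-- Let `n ≥ 3` and let `m ≥ 1` have `n`-decomposition
`m = F c₁ + ⋯ + F c_k`, encoded by the list `L = [c₁, …, c_k]` with
`cᵢ ≥ n`, consecutive gaps at least `n`, and `(L.map F).sum = m`.
Then `S c_k ∘ S c_{k-1} ∘ ⋯ ∘ S c₁` equals the first `m` letters of the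
infinite `n`-string `W = S_∞`. -/
theorem decomposition_gives_prefix (n : ℕ) (hn : 3 ≤ n) (F : ℕ → ℕ)
    (hF1 : ∀ i, 1 ≤ i → i ≤ n → F i = 1)
    (hFrec : ∀ m, n ≤ m → F (m + 1) = F m + F (m + 1 - n))
    (S : ℕ → List ℕ)
    (hS1 : ∀ i, 1 ≤ i → i ≤ n → S i = [i])
    (hSrec : ∀ m, n ≤ m → S (m + 1) = S m ++ S (m + 1 - n))
    (W : ℕ → ℕ)
    (hW : ∀ m, n ≤ m → S m = (List.range (S m).length).map W)
    (m : ℕ) (hm : 1 ≤ m) (L : List ℕ)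
    (hLn : ∀ c ∈ L, n ≤ c)
    (hLgap : L.Chain' (fun a b => a + n ≤ b))
    (hLsum : (L.map F).sum = m) :
    (L.reverse.map S).flatten = (List.range m).map W :=
  decomposition_gives_prefix_general n hn F hF1 hFrec S hS1 hSrec W hW m L hLn hLgap hLsum
end

section
/- Let n ≥ 3 and m ≥ 1, and let m = F_{n,c_1} + F_{n,c_2} + ⋯ + F_{n,c_k} be the n-decomposition of m. Then for each 1 ≤ i ≤ n-1, N_{a_i}(m) = F_{n,c_1-(n+i-1)} + F_{n,c_2-(n+i-1)} + ⋯ + F_{n,c_k-(n+i-1)}, and N_{a_n}(m) = F_{n,c_1-(n-1)} + F_{n,c_2-(n-1)} + ⋯ + F_{n,c_k-(n-1)}. -/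
/-!
Read the `n`-decomposition from its largest term down. Since `c_{j-1} < c_j + 1 - n`, induction
on the number of terms shows that `S_{c_k} S_{c_{k-1}} ⋯ S_{c_1}` is a prefix of
`S_{c_k + 1} = S_{c_k} S_{c_k + 1 - n}`, so it is the prefix of `S_∞` of length
`F c_1 + ⋯ + F c_k = m`. The number of letters `a_i` in `S_c` obeys the recurrence of `F`, and
the backward extension of `F` makes `F (c - letterOffset n i)` agree with it for `c ≤ n`;
summing over the decomposition gives `N_{a_i}(m)`.
-/

structure IsGenFib (n : ℕ) (F : ℤ → ℤ) : Prop where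
  eq_one : ∀ i : ℤ, 1 ≤ i → i ≤ (n : ℤ) → F i = 1
  recurrence : ∀ m : ℤ, F (m + 1) = F m + F (m + 1 - n)

structure IsNString (n : ℕ) (S : ℕ → List ℕ) : Prop where
  singleton : ∀ i, 1 ≤ i → i ≤ n → S i = [i]
  recurrence : ∀ m, n ≤ m → S (m + 1) = S m ++ S (m + 1 - n)

def letterOffset (n i : ℕ) : ℤ := if i = n then n - 1 else n + i - 1

namespace IsGenFib

variable {n : ℕ} {F : ℤ → ℤ}

theorem eq_sub (hF : IsGenFib n F) (k : ℤ) : F k = F (k + n) - F (k + n - 1) := by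
  have := hF.recurrence (k + n - 1)
  rw [sub_add_cancel, add_sub_cancel_right] at this
  omega

theorem eq_zero_of_nonpos_of_ne (hF : IsGenFib n F) {k : ℤ} (hlo : 3 - 2 * (n : ℤ) ≤ k)
    (hhi : k ≤ 0) (hk : k ≠ 1 - n) : F k = 0 := by
  have zero_of_mem_Icc (k : ℤ) (hlo : 2 - (n : ℤ) ≤ k) (hhi : k ≤ 0) : F k = 0 := by
    rw [hF.eq_sub, hF.eq_one _ (by omega) (by omega), hF.eq_one _ (by omega) (by omega),
      sub_self]
  rcases le_or_gt (2 - (n : ℤ)) k with h | h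
  · exact zero_of_mem_Icc k h hhi
  · rw [hF.eq_sub, zero_of_mem_Icc _ (by omega) (by omega),
      zero_of_mem_Icc _ (by omega) (by omega), sub_self]

theorem eq_one_at_one_sub (hF : IsGenFib n F) (hn : 2 ≤ n) : F (1 - n) = 1 := by
  rw [hF.eq_sub, sub_add_cancel, sub_self, hF.eq_one 1 le_rfl (by omega),
    hF.eq_zero_of_nonpos_of_ne (by omega) le_rfl (by omega), sub_zero]

theorem eq_sub_letterOffset (hF : IsGenFib n F) {i j : ℕ} (hi : 1 ≤ i) (hin : i ≤ n)
    (hj : 1 ≤ j) (hjn : j ≤ n) : F (j - letterOffset n i) = if j = i then 1 else 0 := by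
  unfold letterOffset
  split_ifs with hin' hji hji
  · rw [hji, hin', sub_sub_cancel, hF.eq_one 1 le_rfl (by omega)]
  · exact hF.eq_zero_of_nonpos_of_ne (by omega) (by omega) (by omega)
  · rw [hji, show (i : ℤ) - (n + i - 1) = 1 - n by ring, hF.eq_one_at_one_sub (by omega)]
  · exact hF.eq_zero_of_nonpos_of_ne (by omega) (by omega) (by omega)

theorem eq_shift_of_rec (hF : IsGenFib n F) (hn : 0 < n) {g : ℕ → ℤ} (σ : ℤ)
    (hg : ∀ j, n ≤ j → g (j + 1) = g j + g (j + 1 - n))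
    (hbase : ∀ j, 1 ≤ j → j ≤ n → g j = F (j - σ)) (j : ℕ) (hj : 1 ≤ j) :
    g j = F (j - σ) := by
  induction j using Nat.strong_induction_on with
  | _ j ih =>
    rcases le_or_gt j n with hjn | hjn
    · exact hbase j hj hjn
    · obtain ⟨k, rfl⟩ : ∃ k, j = k + 1 := ⟨j - 1, by omega⟩
      rw [hg k (by omega), ih k (by omega) (by omega), ih (k + 1 - n) (by omega) (by omega)]
      push_cast [Nat.cast_sub (show n ≤ k + 1 by omega)]
      rw [show (k : ℤ) + 1 - σ = k - σ + 1 by ring, hF.recurrence (k - σ)]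
      ring_nf

end IsGenFib

theorem List.eq_map_range_of_isPrefix {α : Type*} {W : ℕ → α} {w : List α} {k : ℕ}
    (h : w <+: (List.range k).map W) : w = (List.range w.length).map W :=
  calc w = ((List.range k).map W).take w.length := List.prefix_iff_eq_take.1 h
    _ = (List.range w.length).map W := by
      rw [← List.map_take, List.take_range, min_eq_left (by simpa using h.length_le)]

-- The statement's `L.map (fun c => F (c : ℤ))` coerces `L` to `List ℤ` through the list monad.
theorem List.map_natCast_bind (L : List ℕ) (f : ℤ → ℤ) :
    ((do let a ← L; pure (a : ℤ)) : List ℤ).map f = L.map fun c : ℕ => f c := by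
  simp [← List.map_eq_flatMap, Function.comp_def]

namespace IsNString

variable {n : ℕ} {F : ℤ → ℤ} {S : ℕ → List ℕ}

theorem length_eq (hS : IsNString n S) (hF : IsGenFib n F) (hn : 0 < n) (j : ℕ) (hj : 1 ≤ j) :
    ((S j).length : ℤ) = F j := by
  simpa using hF.eq_shift_of_rec hn (g := fun j => ((S j).length : ℤ)) 0
    (fun j hj => by simp [hS.recurrence j hj])
    (fun j hj hjn => by simp [hS.singleton j hj hjn, hF.eq_one j (by omega) (by omega)]) j hj

theorem count_eq (hS : IsNString n S) (hF : IsGenFib n F) {i : ℕ} (hi : 1 ≤ i) (hin : i ≤ n)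
    (j : ℕ) (hj : 1 ≤ j) : ((S j).count i : ℤ) = F (j - letterOffset n i) :=
  hF.eq_shift_of_rec (by omega) (g := fun j => ((S j).count i : ℤ)) _
    (fun j hj => by simp [hS.recurrence j hj])
    (fun j hj hjn => by
      simp [hS.singleton j hj hjn, hF.eq_sub_letterOffset hi hin hj hjn, List.count_singleton])
    j hj

theorem isPrefix_of_le (hS : IsNString n S) {a b : ℕ} (hna : n ≤ a) (hab : a ≤ b) :
    S a <+: S b := by
  induction b, hab using Nat.le_induction with
  | base => exact List.prefix_refl _
  | succ b hab ih => exact ih.trans (hS.recurrence b (hna.trans hab) ▸ List.prefix_append _ _)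

theorem flatten_map_isPrefix (hS : IsNString n S) (D : List ℕ) (hDn : ∀ c ∈ D, n ≤ c)
    (hD : D.Pairwise (fun a b => b + n ≤ a)) (b : ℕ) (hDb : ∀ c ∈ D, c < b) :
    (D.map S).flatten <+: S b := by
  induction D generalizing b with
  | nil => exact List.nil_prefix
  | cons c D ih =>
    rw [List.pairwise_cons] at hD
    have hcn := hDn c List.mem_cons_self
    have htail : (D.map S).flatten <+: S (c + 1 - n) :=
      ih (fun c' hc' => hDn c' (List.mem_cons_of_mem c hc')) hD.2 _
        (fun c' hc' => by have := hD.1 c' hc'; omega)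
    have hstep : S c ++ (D.map S).flatten <+: S (c + 1) := by
      rw [hS.recurrence c hcn]
      exact (List.prefix_append_right_inj _).2 htail
    simpa using hstep.trans (hS.isPrefix_of_le (by omega) (hDb c List.mem_cons_self))

theorem map_range_eq_flatten (hS : IsNString n S) (hF : IsGenFib n F) (hn : 0 < n)
    {W : ℕ → ℕ} (hW : ∀ m, n ≤ m → S m = (List.range (S m).length).map W)
    {L : List ℕ} (hLn : ∀ c ∈ L, n ≤ c) (hL : L.Pairwise (fun a b => a + n ≤ b)) {m : ℕ}
    (hm : (m : ℤ) = (L.map fun c : ℕ => F c).sum) :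
    (List.range m).map W = (L.reverse.map S).flatten := by
  have hprefix : (L.reverse.map S).flatten <+: S (L.sum + n) :=
    hS.flatten_map_isPrefix _ (by simpa using hLn) (List.pairwise_reverse.2 hL) _
      fun c hc => by have := List.le_sum_of_mem (List.mem_reverse.1 hc); omega
  rw [hW _ (by omega)] at hprefix
  have hlength : (L.reverse.map S).flatten.length = m := by
    zify
    rw [hm, List.length_flatten, Nat.cast_list_sum]
    simp only [List.map_map, List.map_reverse, List.sum_reverse]
    exact congrArg List.sum <| List.map_congr_left fun c hc =>
      hS.length_eq hF hn c (by have := hLn c hc; omega)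
  rw [List.eq_map_range_of_isPrefix hprefix, hlength]

theorem count_flatten_reverse (hS : IsNString n S) (hF : IsGenFib n F) {L : List ℕ}
    (hLn : ∀ c ∈ L, n ≤ c) {i : ℕ} (hi : 1 ≤ i) (hin : i ≤ n) :
    ((L.reverse.map S).flatten.count i : ℤ) =
      (L.map fun c : ℕ => F (c - letterOffset n i)).sum := by
  rw [List.count_flatten, Nat.cast_list_sum]
  simp only [List.map_map, List.map_reverse, List.sum_reverse]
  exact congrArg List.sum <| List.map_congr_left fun c hc =>
    hS.count_eq hF hi hin c (by have := hLn c hc; omega)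

end IsNString

theorem letter_counts_of_decomposition_general (n : ℕ) (hn : 3 ≤ n) (F : ℤ → ℤ)
    (hF1 : ∀ i : ℤ, 1 ≤ i → i ≤ (n : ℤ) → F i = 1)
    (hFrec : ∀ m : ℤ, F (m + 1) = F m + F (m + 1 - n))
    (S : ℕ → List ℕ)
    (hS1 : ∀ i, 1 ≤ i → i ≤ n → S i = [i])
    (hSrec : ∀ m, n ≤ m → S (m + 1) = S m ++ S (m + 1 - n))
    (W : ℕ → ℕ)
    (hW : ∀ m, n ≤ m → S m = (List.range (S m).length).map W)
    (m : ℕ) (L : List ℕ)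
    (hLn : ∀ c ∈ L, n ≤ c)
    (hLgap : L.Chain' (fun a b => a + n ≤ b))
    (hLsum : (m : ℤ) = (L.map (fun c => F (c : ℤ))).sum) :
    (∀ i, 1 ≤ i → i ≤ n - 1 →
      (((List.range m).map W).count i : ℤ)
        = (L.map (fun c => F ((c : ℤ) - ((n : ℤ) + (i : ℤ) - 1)))).sum) ∧
    ((((List.range m).map W).count n : ℤ)
        = (L.map (fun c => F ((c : ℤ) - ((n : ℤ) - 1)))).sum) := by
  have hF : IsGenFib n F := ⟨hF1, hFrec⟩
  have hS : IsNString n S := ⟨hS1, hSrec⟩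
  have : Trans (fun a b : ℕ => a + n ≤ b) (fun a b => a + n ≤ b) (fun a b => a + n ≤ b) :=
    ⟨fun hab hbc => by omega⟩
  have hprefix := hS.map_range_eq_flatten hF (by omega) hW hLn
    (List.isChain_iff_pairwise.1 hLgap) (by rw [hLsum, List.map_natCast_bind])
  have hcount (i : ℕ) (hi : 1 ≤ i) (hin : i ≤ n) :
      (((List.range m).map W).count i : ℤ) =
        (L.map fun c : ℕ => F (c - letterOffset n i)).sum := by
    rw [hprefix, hS.count_flatten_reverse hF hLn hi hin]
  refine ⟨fun i hi hin => ?_, ?_⟩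
  · rw [hcount i hi (by omega), List.map_natCast_bind, letterOffset, if_neg (by omega)]
  · rw [hcount n (by omega) le_rfl, List.map_natCast_bind, letterOffset, if_pos rfl]

/-- Let `n ≥ 3` and let `m ≥ 1` have `n`-decomposition `m = F c₁ + ⋯ + F c_k`
(encoded by the list `L`).  Here `F : ℤ → ℤ` is the generalized Fibonacci
sequence extended to all integer indices, `S` the `n`-string sequence and
`W = S_∞` the infinite `n`-string; `N_{a_i}(m) = ((List.range m).map W).count i`
is the number of occurrences of the letter `a_i` among the first `m` letters
of `S_∞`.  Then for `1 ≤ i ≤ n-1`,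
`N_{a_i}(m) = F (c₁-(n+i-1)) + ⋯ + F (c_k-(n+i-1))`, and
`N_{a_n}(m) = F (c₁-(n-1)) + ⋯ + F (c_k-(n-1))`. -/
theorem letter_counts_of_decomposition (n : ℕ) (hn : 3 ≤ n) (F : ℤ → ℤ)
    (hF1 : ∀ i : ℤ, 1 ≤ i → i ≤ (n : ℤ) → F i = 1)
    (hFrec : ∀ m : ℤ, F (m + 1) = F m + F (m + 1 - n))
    (S : ℕ → List ℕ)
    (hS1 : ∀ i, 1 ≤ i → i ≤ n → S i = [i])
    (hSrec : ∀ m, n ≤ m → S (m + 1) = S m ++ S (m + 1 - n))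
    (W : ℕ → ℕ)
    (hW : ∀ m, n ≤ m → S m = (List.range (S m).length).map W)
    (m : ℕ) (hm : 1 ≤ m) (L : List ℕ)
    (hLn : ∀ c ∈ L, n ≤ c)
    (hLgap : L.Chain' (fun a b => a + n ≤ b))
    (hLsum : (m : ℤ) = (L.map (fun c => F (c : ℤ))).sum) :
    (∀ i, 1 ≤ i → i ≤ n - 1 →
      (((List.range m).map W).count i : ℤ)
        = (L.map (fun c => F ((c : ℤ) - ((n : ℤ) + (i : ℤ) - 1)))).sum) ∧
    ((((List.range m).map W).count n : ℤ)
        = (L.map (fun c => F ((c : ℤ) - ((n : ℤ) - 1)))).sum) :=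
  letter_counts_of_decomposition_general n hn F hF1 hFrec S hS1 hSrec W hW m L hLn hLgap hLsum
end

section
/- Let n ≥ 3 and fix integers i and j with n ≤ i ≤ j - (n-1). Then the concatenation S_j ∘ S_i gives the first F_{n,i} + F_{n,j} letters of S_∞; that is, S_j ∘ S_i is a prefix of S_∞. -/
/-- Let `n ≥ 3` and `n ≤ i ≤ j - (n-1)` (i.e. `i + (n-1) ≤ j`).  Then
`S j ∘ S i` gives the first `F i + F j` letters of the infinite `n`-string
`W = S_∞`. -/
theorem concat_two_prefix (n : ℕ) (hn : 3 ≤ n) (F : ℕ → ℕ)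
    (hF1 : ∀ i, 1 ≤ i → i ≤ n → F i = 1)
    (hFrec : ∀ m, n ≤ m → F (m + 1) = F m + F (m + 1 - n))
    (S : ℕ → List ℕ)
    (hS1 : ∀ i, 1 ≤ i → i ≤ n → S i = [i])
    (hSrec : ∀ m, n ≤ m → S (m + 1) = S m ++ S (m + 1 - n))
    (W : ℕ → ℕ)
    (hW : ∀ m, n ≤ m → S m = (List.range (S m).length).map W)
    (i j : ℕ) (hi : n ≤ i) (hij : i + (n - 1) ≤ j) :
    S j ++ S i = (List.range (F i + F j)).map W := by
  -- length lemma: |S m| = F m for m ≥ 1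
  have hlen : ∀ m, 1 ≤ m → (S m).length = F m := by
    intro m
    induction m using Nat.strong_induction_on with
    | _ m ih =>
      intro hm
      rcases le_or_gt m n with h | h
      · rw [hS1 m hm h, hF1 m hm h]; rfl
      · obtain ⟨k, rfl⟩ : ∃ k, m = k + 1 := ⟨m - 1, by omega⟩
        have hk : n ≤ k := by omega
        rw [hSrec k hk, hFrec k hk, List.length_append,
          ih k (by omega) (by omega), ih (k + 1 - n) (by omega) (by omega)]
  -- prefix chain: S a is a prefix of S b for n ≤ a ≤ b
  have hpre : ∀ a b, n ≤ a → a ≤ b → S a <+: S b := by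
    intro a b ha hab
    induction b with
    | zero => omega
    | succ b ihb =>
      rcases Nat.lt_or_ge a (b + 1) with h | h
      · have : S a <+: S b := ihb (by omega)
        refine this.trans ?_
        rw [hSrec b (by omega)]
        exact List.prefix_append _ _
      · have : a = b + 1 := by omega
        rw [this]
      -- done
  have hj1 : n ≤ j := by omega
  have hSi : S i <+: S (j + 1 - n) := hpre i (j + 1 - n) hi (by omega)
  obtain ⟨t, ht⟩ := hSi
  have hSj1 : S (j + 1) = (S j ++ S i) ++ t := by
    rw [hSrec j hj1, ← ht, List.append_assoc]
  have hWj1 := hW (j + 1) (by omega)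
  have hL : (S j ++ S i).length = F i + F j := by
    rw [List.length_append, hlen j (by omega), hlen i (by omega)]; omega
  have hle : F i + F j ≤ (S (j + 1)).length := by
    rw [hSj1, List.length_append, hL]; omega
  have := congrArg (List.take (F i + F j)) hWj1
  rw [← List.map_take, List.take_range, min_eq_left hle] at this
  rw [hSj1, ← hL, List.take_left] at this
  rw [hL] at this
  exact this
end

section
/- Let n ≥ 3 and m ≥ 2. Then there exist r ≥ 0, positive integers d_1, …, d_r, and an index i with n ≤ i ≤ n + (n-1)(m-1) + 1 such that (S_{n+(n-1)m} ∘ S_{n+(n-1)(m-1)} ∘ ⋯ ∘ S_{n+(n-1)} ∘ S_n) ∘ S_{d_1} ∘ ⋯ ∘ S_{d_r} = S_{n+(n-1)m+1} ∘ S_i. -/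
/-- The concatenation `S (n+(n-1)u) ++ ⋯ ++ S (n+(n-1)) ++ S n`. -/
def Gfl (n : ℕ) (S : ℕ → List ℕ) (u : ℕ) : List ℕ :=
  ((List.range (u + 1)).reverse.map (fun t => S (n + (n - 1) * t))).flatten

lemma Gfl_succ (n : ℕ) (S : ℕ → List ℕ) (u : ℕ) :
    Gfl n S (u + 1) = S (n + (n - 1) * (u + 1)) ++ Gfl n S u := by
  unfold Gfl
  rw [List.range_succ]
  simp

lemma S_letters (n : ℕ) (hn : 3 ≤ n) (S : ℕ → List ℕ)
    (hS1 : ∀ i, 1 ≤ i → i ≤ n → S i = [i])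
    (hSrec : ∀ m, n ≤ m → S (m + 1) = S m ++ S (m + 1 - n)) :
    ∀ k, 1 ≤ k → ∀ x ∈ S k, 1 ≤ x ∧ x ≤ n := by
  intro k
  induction k using Nat.strong_induction_on with
  | _ k ih =>
    intro hk x hx
    by_cases h : k ≤ n
    · rw [hS1 k hk h] at hx
      simp at hx
      omega
    · have hk1 : n ≤ k - 1 := by omega
      have hke : k = (k - 1) + 1 := by omega
      rw [hke, hSrec (k - 1) hk1] at hx
      rcases List.mem_append.1 hx with h' | h'
      · exact ih (k - 1) (by omega) (by omega) x h'
      · exact ih (k - 1 + 1 - n) (by omega) (by omega) x h'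

lemma S_prefix (n : ℕ) (S : ℕ → List ℕ)
    (hSrec : ∀ m, n ≤ m → S (m + 1) = S m ++ S (m + 1 - n)) :
    ∀ c i, n ≤ i → S i <+: S (i + c) := by
  intro c
  induction c with
  | zero => intro i _; simp
  | succ c ih =>
    intro i hi
    have h := hSrec (i + c) (le_trans hi (Nat.le_add_right _ _))
    rw [show i + (c + 1) = (i + c) + 1 from rfl, h]
    exact (ih i hi).trans (List.prefix_append _ _)

lemma flat_id (n : ℕ) (S : ℕ → List ℕ)
    (hS1 : ∀ i, 1 ≤ i → i ≤ n → S i = [i]) :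
    ∀ L : List ℕ, (∀ x ∈ L, 1 ≤ x ∧ x ≤ n) → (L.map S).flatten = L := by
  intro L
  induction L with
  | nil => simp
  | cons a L ih =>
    intro hL
    have ha := hL a (by simp)
    simp only [List.map_cons, List.flatten_cons, hS1 a ha.1 ha.2,
      ih (fun x hx => hL x (by simp [hx]))]
    rfl

lemma Gfl_prefix (n : ℕ) (hn : 3 ≤ n) (S : ℕ → List ℕ)
    (hS1 : ∀ i, 1 ≤ i → i ≤ n → S i = [i])
    (hSrec : ∀ m, n ≤ m → S (m + 1) = S m ++ S (m + 1 - n)) :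
    ∀ u, Gfl n S u <+: S (n + (n - 1) * (u + 1)) := by
  intro u
  induction u using Nat.strong_induction_on with
  | _ u ih =>
    match u with
    | 0 =>
      have h0 : Gfl n S 0 = S n := by unfold Gfl; rw [List.range_succ]; simp
      rw [h0, show n + (n - 1) * (0 + 1) = n + (n - 1) by ring]
      exact S_prefix n S hSrec (n - 1) _ le_rfl
    | 1 =>
      have h0 : Gfl n S 0 = S n := by unfold Gfl; rw [List.range_succ]; simp
      have h1 : Gfl n S 1 = S (n + (n - 1) * 1) ++ S n := by
        rw [Gfl_succ, h0]
      have h2 : S (n + (n - 1) * 1 + 1) = S (n + (n - 1) * 1) ++ S n := by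
        rw [hSrec (n + (n - 1) * 1) (by omega)]
        congr 2
        omega
      rw [h1, ← h2]
      have : n + (n - 1) * 2 = (n + (n - 1) * 1 + 1) + (n - 2) := by omega
      rw [this]
      exact S_prefix n S hSrec (n - 2) _ (by omega)
    | (v + 2) =>
      have IH : Gfl n S v <+: S (n + (n - 1) * (v + 1)) := ih v (by omega)
      have e1 : (n - 1) * (v + 1) = (n - 1) * v + (n - 1) := by ring
      have e2 : (n - 1) * (v + 2) = (n - 1) * v + (n - 1) * 2 := by ring
      have e3 : (n - 1) * (v + 3) = (n - 1) * v + (n - 1) * 3 := by ring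
      set a := (n - 1) * v with ha
      set A := n + (n - 1) * (v + 2) with hA
      set B := n + (n - 1) * (v + 1) with hB
      have hnA : n ≤ A := by omega
      have hnB : n ≤ B := by omega
      -- S (A+1) = S A ++ S B
      have h1 : S (A + 1) = S A ++ S B := by
        rw [hSrec A hnA]
        congr 2
        omega
      -- S (A+2) = S A ++ S B ++ S (B+1)
      have h2 : S (A + 2) = S A ++ (S B ++ S (B + 1)) := by
        have := hSrec (A + 1) (by omega)
        rw [show A + 1 + 1 = A + 2 from rfl] at this
        rw [this, h1]
        have : A + 1 + 1 - n = B + 1 := by omega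
        rw [this, List.append_assoc]
      -- Gfl v <+: S (B+1)
      have hGu : Gfl n S v <+: S (B + 1) := IH.trans (S_prefix n S hSrec 1 B hnB)
      obtain ⟨t, ht⟩ := hGu
      -- Gfl (v+2) ++ t = S (A+2)
      have h3 : Gfl n S (v + 2) ++ t = S (A + 2) := by
        rw [Gfl_succ, Gfl_succ, h2, ← hB, ← hA, ← ht]
        simp [List.append_assoc]
      have h4 : S (A + 2) <+: S (n + (n - 1) * (v + 2 + 1)) := by
        have : n + (n - 1) * (v + 3) = (A + 2) + (n - 3) := by omega
        rw [show v + 2 + 1 = v + 3 from rfl, this]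
        exact S_prefix n S hSrec (n - 3) _ (by omega)
      exact List.IsPrefix.trans ⟨t, h3⟩ h4

/-- Let `n ≥ 3` and `m ≥ 2`.  There exist a (possibly empty) list of positive
indices `d₁, …, d_r` and an index `i` with `n ≤ i ≤ n + (n-1)(m-1) + 1` such
that `(S (n+(n-1)m) ∘ ⋯ ∘ S (n+(n-1)) ∘ S n) ∘ S d₁ ∘ ⋯ ∘ S d_r
  = S (n+(n-1)m+1) ∘ S i`. -/
theorem concat_extend_to_pair (n : ℕ) (hn : 3 ≤ n)
    (S : ℕ → List ℕ)
    (hS1 : ∀ i, 1 ≤ i → i ≤ n → S i = [i])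
    (hSrec : ∀ m, n ≤ m → S (m + 1) = S m ++ S (m + 1 - n))
    (m : ℕ) (hm : 2 ≤ m) :
    ∃ ds : List ℕ, (∀ d ∈ ds, 1 ≤ d) ∧
      ∃ i, n ≤ i ∧ i ≤ n + (n - 1) * (m - 1) + 1 ∧
        ((List.range (m + 1)).reverse.map (fun t => S (n + (n - 1) * t))).flatten
            ++ (ds.map S).flatten
          = S (n + (n - 1) * m + 1) ++ S i := by
  obtain ⟨u, rfl⟩ : ∃ u, m = u + 2 := ⟨m - 2, by omega⟩
  have e1 : (n - 1) * (u + 1) = (n - 1) * u + (n - 1) := by ring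
  have e2 : (n - 1) * (u + 2) = (n - 1) * u + (n - 1) * 2 := by ring
  set A := n + (n - 1) * (u + 2) with hA
  set B := n + (n - 1) * (u + 1) with hB
  have e4 : (n - 1) * (u + 2 - 1) = (n - 1) * u + (n - 1) := by
    rw [show u + 2 - 1 = u + 1 from rfl]; ring
  have hnB : 1 ≤ B := by omega
  obtain ⟨R, hR⟩ := Gfl_prefix n hn S hS1 hSrec u
  rw [← hB] at hR
  have hRmem : ∀ x ∈ R, 1 ≤ x ∧ x ≤ n := by
    intro x hx
    exact S_letters n hn S hS1 hSrec B hnB x (by rw [← hR]; simp [hx])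
  refine ⟨R, fun d hd => (hRmem d hd).1, B, by omega, by omega, ?_⟩
  have hflat : (R.map S).flatten = R := flat_id n S hS1 R hRmem
  have h1 : S (A + 1) = S A ++ S B := by
    rw [hSrec A (by omega)]
    congr 2
    omega
  show Gfl n S (u + 2) ++ (R.map S).flatten = S (A + 1) ++ S B
  rw [hflat, Gfl_succ, Gfl_succ, ← hA, ← hB, h1]
  simp only [List.append_assoc, hR]
end

section
/- Let n ≥ 3 and m ≥ 2. Then there exist r ≥ 0 and positive integers d_1, …, d_r such that (S_{n+(n-1)m} ∘ S_{n+(n-1)(m-1)} ∘ ⋯ ∘ S_{n+(n-1)} ∘ S_n) ∘ S_{d_1} ∘ ⋯ ∘ S_{d_r} = S_{n+(n-1)m+2}. -/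
/-- Let `n ≥ 3` and `m ≥ 2`.  There exists a (possibly empty) list of positive
indices `d₁, …, d_r` such that
`(S (n+(n-1)m) ∘ ⋯ ∘ S (n+(n-1)) ∘ S n) ∘ S d₁ ∘ ⋯ ∘ S d_r = S (n+(n-1)m+2)`. -/
theorem concat_extend_to_single (n : ℕ) (hn : 3 ≤ n)
    (S : ℕ → List ℕ)
    (hS1 : ∀ i, 1 ≤ i → i ≤ n → S i = [i])
    (hSrec : ∀ m, n ≤ m → S (m + 1) = S m ++ S (m + 1 - n))
    (m : ℕ) (hm : 2 ≤ m) :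
    ∃ ds : List ℕ, (∀ d ∈ ds, 1 ≤ d) ∧
      ((List.range (m + 1)).reverse.map (fun t => S (n + (n - 1) * t))).flatten
          ++ (ds.map S).flatten
        = S (n + (n - 1) * m + 2) := by
  obtain ⟨q, rfl⟩ : ∃ q, n = q + 1 := ⟨n - 1, by omega⟩
  have hq : 2 ≤ q := by omega
  simp only [Nat.add_sub_cancel]
  have rec2 : ∀ a, S (q + 1 + a + 1) = S (q + 1 + a) ++ S (a + 1) := by
    intro a
    have h := hSrec (q + 1 + a) (by omega)
    have e : q + 1 + a + 1 - (q + 1) = a + 1 := by omega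
    rwa [e] at h
  have C_succ : ∀ t : ℕ,
      ((List.range (t + 2)).reverse.map (fun s => S (q + 1 + q * s))).flatten
        = S (q + 1 + q * (t + 1))
          ++ ((List.range (t + 1)).reverse.map (fun s => S (q + 1 + q * s))).flatten := by
    intro t
    rw [show t + 2 = (t + 1) + 1 from rfl, List.range_succ]
    simp
  have ext : ∀ t k, 2 ≤ k →
      (∃ ds : List ℕ, (∀ d ∈ ds, 1 ≤ d) ∧
        ((List.range (t + 1)).reverse.map (fun s => S (q + 1 + q * s))).flatten
          ++ (ds.map S).flatten = S (q + 1 + q * t + 2)) →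
      ∃ ds : List ℕ, (∀ d ∈ ds, 1 ≤ d) ∧
        ((List.range (t + 1)).reverse.map (fun s => S (q + 1 + q * s))).flatten
          ++ (ds.map S).flatten = S (q + 1 + q * t + k) := by
    intro t k hk
    induction k, hk using Nat.le_induction with
    | base => exact id
    | succ k hk ihk =>
      intro h
      obtain ⟨ds, hds, hC⟩ := ihk h
      refine ⟨ds ++ [q * t + k + 1], ?_, ?_⟩
      · intro d hd
        rcases List.mem_append.1 hd with h' | h'
        · exact hds d h'
        · simp at h'; omega
      · have h1 := rec2 (q * t + k)
        have e1 : q + 1 + (q * t + k) = q + 1 + q * t + k := by ring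
        rw [e1] at h1
        rw [show q + 1 + q * t + (k + 1) = q + 1 + q * t + k + 1 from by ring, h1,
          List.map_append, List.flatten_append, ← List.append_assoc, hC]
        simp
  have key : ∀ t : ℕ, ∃ ds : List ℕ, (∀ d ∈ ds, 1 ≤ d) ∧
      ((List.range (t + 1)).reverse.map (fun s => S (q + 1 + q * s))).flatten
        ++ (ds.map S).flatten = S (q + 1 + q * t + 2) := by
    intro t
    induction t using Nat.strong_induction_on with
    | _ t ih =>
    match t, ih with
    | 0, _ =>
      refine ⟨[1, 2], by simp, ?_⟩
      have h1 := rec2 0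
      have h2 := rec2 1
      simp only [List.reverse_singleton, List.map_cons, List.map_nil,
        List.flatten_cons, List.flatten_nil, List.append_nil, Nat.mul_zero, Nat.add_zero] at *
      rw [show q + 1 + 2 = q + 1 + 1 + 1 from rfl, h2, h1]
      simp [List.range_succ]
    | 1, _ =>
      refine ⟨[q + 2], by simp, ?_⟩
      have h1 := rec2 q
      have h2 := rec2 (q + 1)
      rw [show (1:ℕ) + 1 = 0 + 2 from rfl, C_succ 0]
      simp only [List.reverse_singleton, List.map_cons, List.map_nil,
        List.flatten_cons, List.flatten_nil, List.append_nil, Nat.mul_zero, Nat.add_zero,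
        Nat.mul_one]
      rw [show q + 1 + q + 2 = q + 1 + (q + 1) + 1 from by ring, h2,
        show q + 1 + (q + 1) = q + 1 + q + 1 from by ring, h1]
      simp [List.range_succ]
    | (t+2), ih =>
      obtain ⟨ds, hds, hC⟩ := ext t (q + 1) (by omega) (ih t (by omega))
      refine ⟨ds, hds, ?_⟩
      rw [C_succ (t + 1), C_succ t]
      have h1 := rec2 (q * (t + 2))
      rw [show q * (t + 2) + 1 = q + 1 + q * (t + 1) from by ring] at h1
      have h2 := rec2 (q * (t + 2) + 1)
      rw [show t + 1 + 1 = t + 2 from rfl,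
        show q + 1 + q * (t + 2) + 2 = q + 1 + (q * (t + 2) + 1) + 1 from by ring, h2,
        show q + 1 + (q * (t + 2) + 1) = q + 1 + q * (t + 2) + 1 from by ring, h1,
        show q * (t + 2) + 1 + 1 = q + 1 + q * t + (q + 1) from by ring, ← hC]
      simp [List.append_assoc]
  exact key m
end

section
/- Let n ≥ 3 and let i and j be positive integers. If F_{n,u} is the largest summand in the n-decomposition of i and F_{n,v} is the largest summand in the n-decomposition of j (i.e., u and v are the largest indices appearing in the respective decompositions), then u > v implies i > j. -/
/-!
Since `F (a + 1) = F a + F (a + 1 - n)`, adding the summands of an `n`-decomposition from the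
smallest index upwards telescopes: each partial sum stays below `F (c + 1)`, `c` the index just
added, because the next index exceeds `c` by at least `n`. Hence a number whose top index is `v`
is smaller than `F (v + 1)`, while a number whose top index is `u > v` is at least
`F u ≥ F (v + 1)`.
-/

section DelayedFibonacci

variable {n : ℕ} {F : ℕ → ℕ}

theorem apply_le_apply_succ_of_rec (hF1 : ∀ i, 1 ≤ i → i ≤ n → F i = 1)
    (hFrec : ∀ m, n ≤ m → F (m + 1) = F m + F (m + 1 - n)) {m : ℕ} (hm : 1 ≤ m) :
    F m ≤ F (m + 1) := by
  rcases le_or_gt n m with h | h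
  · rw [hFrec m h]
    exact Nat.le_add_right _ _
  · rw [hF1 m hm h.le, hF1 (m + 1) (by omega) h]

theorem monotoneOn_of_rec (hF1 : ∀ i, 1 ≤ i → i ≤ n → F i = 1)
    (hFrec : ∀ m, n ≤ m → F (m + 1) = F m + F (m + 1 - n)) :
    MonotoneOn F (Set.Ici 1) :=
  monotoneOn_of_le_succ Set.ordConnected_Ici fun _ _ hm _ =>
    apply_le_apply_succ_of_rec hF1 hFrec hm

theorem one_le_apply_of_rec (hn : 1 ≤ n) (hF1 : ∀ i, 1 ≤ i → i ≤ n → F i = 1)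
    (hFrec : ∀ m, n ≤ m → F (m + 1) = F m + F (m + 1 - n)) {m : ℕ} (hm : 1 ≤ m) :
    1 ≤ F m :=
  hF1 1 le_rfl hn ▸ monotoneOn_of_rec hF1 hFrec (Set.mem_Ici.2 le_rfl) hm hm

theorem apply_add_sum_add_apply_le_of_isChain (hF1 : ∀ i, 1 ≤ i → i ≤ n → F i = 1)
    (hFrec : ∀ m, n ≤ m → F (m + 1) = F m + F (m + 1 - n)) {w : ℕ} (L : List ℕ) :
    ∀ a, n ≤ a → (a :: L).IsChain (fun a b => a + n ≤ b) → (∀ c ∈ a :: L, c ≤ w) →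
      F a + (L.map F).sum + F (a + 1 - n) ≤ F (w + 1) := by
  have hmono := monotoneOn_of_rec hF1 hFrec
  induction L with
  | nil =>
    intro a ha _ hw
    have haw : a ≤ w := hw a List.mem_cons_self
    simpa [← hFrec a ha] using hmono (Set.mem_Ici.2 (by omega)) (Set.mem_Ici.2 (by omega))
      (by omega : a + 1 ≤ w + 1)
  | cons b L ih =>
    intro a ha hchain hw
    obtain ⟨hab, hchain⟩ := List.isChain_cons_cons.mp hchain
    have htail := ih b (by omega) hchain fun c hc => hw c (List.mem_cons_of_mem a hc)
    have hhead : F a + F (a + 1 - n) ≤ F (b + 1 - n) := by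
      rw [← hFrec a ha]
      exact hmono (Set.mem_Ici.2 (by omega)) (Set.mem_Ici.2 (by omega)) (by omega)
    simp only [List.map_cons, List.sum_cons]
    omega

theorem sum_map_lt_apply_succ_of_isChain (hn : 1 ≤ n) (hF1 : ∀ i, 1 ≤ i → i ≤ n → F i = 1)
    (hFrec : ∀ m, n ≤ m → F (m + 1) = F m + F (m + 1 - n)) {L : List ℕ} {w : ℕ}
    (hchain : L.IsChain (fun a b => a + n ≤ b)) (hLn : ∀ c ∈ L, n ≤ c) (hLw : ∀ c ∈ L, c ≤ w) :
    (L.map F).sum < F (w + 1) := by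
  cases L with
  | nil => exact one_le_apply_of_rec hn hF1 hFrec (Nat.le_add_left 1 w)
  | cons a L =>
    have ha : n ≤ a := hLn a List.mem_cons_self
    have hbound := apply_add_sum_add_apply_le_of_isChain hF1 hFrec L a ha hchain hLw
    have hpos := one_le_apply_of_rec hn hF1 hFrec (by omega : 1 ≤ a + 1 - n)
    simp only [List.map_cons, List.sum_cons]
    omega

end DelayedFibonacci

theorem larger_top_summand_larger_number_general (n : ℕ) (hn : 3 ≤ n) (F : ℕ → ℕ)
    (hF1 : ∀ i, 1 ≤ i → i ≤ n → F i = 1)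
    (hFrec : ∀ m, n ≤ m → F (m + 1) = F m + F (m + 1 - n))
    (i j : ℕ)
    (Li Lj : List ℕ) (u v : ℕ)
    (hLisum : (Li.map F).sum = i)
    (hLjn : ∀ c ∈ Lj, n ≤ c) (hLjgap : Lj.Chain' (fun a b => a + n ≤ b))
    (hLjsum : (Lj.map F).sum = j)
    (hu_mem : u ∈ Li)
    (hv_max : ∀ c ∈ Lj, c ≤ v)
    (huv : v < u) : j < i :=
  calc j = (Lj.map F).sum := hLjsum.symm
    _ < F (v + 1) := sum_map_lt_apply_succ_of_isChain (by omega) hF1 hFrec hLjgap hLjn hv_max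
    _ ≤ F u := monotoneOn_of_rec hF1 hFrec (Set.mem_Ici.2 (by omega))
        (Set.mem_Ici.2 (by omega)) huv
    _ ≤ (Li.map F).sum := List.le_sum_of_mem (List.mem_map_of_mem hu_mem)
    _ = i := hLisum

/-- Let `n ≥ 3` and let `i, j` be positive integers with `n`-decompositions
encoded by the lists `Li`, `Lj`.  If `u` is the largest index appearing in the
decomposition of `i` and `v` the largest index appearing in the decomposition
of `j`, then `u > v` implies `i > j`. -/
theorem larger_top_summand_larger_number (n : ℕ) (hn : 3 ≤ n) (F : ℕ → ℕ)
    (hF1 : ∀ i, 1 ≤ i → i ≤ n → F i = 1)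
    (hFrec : ∀ m, n ≤ m → F (m + 1) = F m + F (m + 1 - n))
    (i j : ℕ) (hi : 1 ≤ i) (hj : 1 ≤ j)
    (Li Lj : List ℕ) (u v : ℕ)
    (hLin : ∀ c ∈ Li, n ≤ c) (hLigap : Li.Chain' (fun a b => a + n ≤ b))
    (hLisum : (Li.map F).sum = i)
    (hLjn : ∀ c ∈ Lj, n ≤ c) (hLjgap : Lj.Chain' (fun a b => a + n ≤ b))
    (hLjsum : (Lj.map F).sum = j)
    (hu_mem : u ∈ Li) (hu_max : ∀ c ∈ Li, c ≤ u)
    (hv_mem : v ∈ Lj) (hv_max : ∀ c ∈ Lj, c ≤ v)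
    (huv : v < u) : j < i :=
  larger_top_summand_larger_number_general n hn F hF1 hFrec i j Li Lj u v hLisum hLjn hLjgap hLjsum
    hu_mem hv_max huv
end

section
/- Let n ≥ 3 and j ≥ 1. Then the (F_{n,nj})th letter of S_∞ is a_n, and for each 1 ≤ u ≤ n-1 the (F_{n,nj+u})th letter of S_∞ is a_u. -/
/-!
Both `|S m| = F m` and "the last letter of `S m` is `a_r` with `r ≡ m (mod n)`, `1 ≤ r ≤ n`"
hold for `S_1, …, S_n` and are preserved by `S_{m+1} = S_m ∘ S_{m+1-n}`, since the appended
block `S_{m+1-n}` is nonempty and its index is congruent to `m + 1` mod `n`. Hence the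
`F m`-th letter of `S_∞`, being the last letter of its prefix `S m`, is `a_r`, and the
residues of `n j` and `n j + u` give the claim.
-/

section NString

variable {n : ℕ} {F : ℕ → ℕ} {S : ℕ → List ℕ}

theorem length_nString_eq (hn : 0 < n)
    (hF1 : ∀ i, 1 ≤ i → i ≤ n → F i = 1)
    (hFrec : ∀ m, n ≤ m → F (m + 1) = F m + F (m + 1 - n))
    (hS1 : ∀ i, 1 ≤ i → i ≤ n → S i = [i])
    (hSrec : ∀ m, n ≤ m → S (m + 1) = S m ++ S (m + 1 - n)) :
    ∀ m, 1 ≤ m → (S m).length = F m := by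
  intro m
  induction m using Nat.strong_induction_on with
  | _ m ih =>
    intro hm
    by_cases hmn : m ≤ n
    · rw [hS1 m hm hmn, hF1 m hm hmn, List.length_singleton]
    · obtain ⟨k, rfl⟩ : ∃ k, m = k + 1 := ⟨m - 1, by omega⟩
      rw [hSrec k (by omega), hFrec k (by omega), List.length_append,
        ih k (by omega) (by omega), ih (k + 1 - n) (by omega) (by omega)]

theorem getLast?_nString_eq (hn : 0 < n)
    (hS1 : ∀ i, 1 ≤ i → i ≤ n → S i = [i])
    (hSrec : ∀ m, n ≤ m → S (m + 1) = S m ++ S (m + 1 - n)) :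
    ∀ m, 1 ≤ m → (S m).getLast? = some ((m - 1) % n + 1) := by
  intro m
  induction m using Nat.strong_induction_on with
  | _ m ih =>
    intro hm
    by_cases hmn : m ≤ n
    · rw [hS1 m hm hmn, List.getLast?_singleton, Nat.mod_eq_of_lt (by omega)]
      congr
      omega
    · obtain ⟨k, rfl⟩ : ∃ k, m = k + 1 := ⟨m - 1, by omega⟩
      have hkn : n ≤ k := by omega
      rw [hSrec k hkn, List.getLast?_append, ih (k + 1 - n) (by omega) (by omega),
        Option.some_or, Nat.mod_eq_sub_mod (a := k + 1 - 1) (by omega)]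
      congr 3
      omega

end NString

theorem apply_length_sub_one_of_getLast?_eq {α : Type*} {l : List α} {W : ℕ → α} {a : α}
    (hl : l = (List.range l.length).map W) (h : l.getLast? = some a) : W (l.length - 1) = a := by
  have hpos : 0 < l.length := List.length_pos_iff.mpr fun hnil => by simp [hnil] at h
  rw [hl, List.getLast?_map, List.getLast?_range, if_neg hpos.ne'] at h
  exact Option.some.inj h

theorem mul_sub_one_mod_add_one {n j : ℕ} (hn : 0 < n) (hj : 1 ≤ j) :
    (n * j - 1) % n + 1 = n := by
  obtain ⟨i, rfl⟩ : ∃ i, j = i + 1 := ⟨j - 1, by omega⟩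
  rw [show n * (i + 1) - 1 = n - 1 + n * i by rw [Nat.mul_succ]; omega,
    Nat.add_mul_mod_self_left, Nat.mod_eq_of_lt (by omega)]
  omega

theorem mul_add_sub_one_mod_add_one {n u : ℕ} (j : ℕ) (hu1 : 1 ≤ u) (hun : u < n) :
    (n * j + u - 1) % n + 1 = u := by
  rw [show n * j + u - 1 = u - 1 + n * j by omega, Nat.add_mul_mod_self_left,
    Nat.mod_eq_of_lt (by omega)]
  omega

/-- Let `n ≥ 3` and `j ≥ 1`.  In the infinite `n`-string `W = S_∞`
(1-indexed: the `p`-th letter is `W (p - 1)`), the `(F (n·j))`-th letter is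
`a_n` and, for `1 ≤ u ≤ n-1`, the `(F (n·j + u))`-th letter is `a_u`. -/
theorem letters_at_genFib_positions (n : ℕ) (hn : 3 ≤ n) (F : ℕ → ℕ)
    (hF1 : ∀ i, 1 ≤ i → i ≤ n → F i = 1)
    (hFrec : ∀ m, n ≤ m → F (m + 1) = F m + F (m + 1 - n))
    (S : ℕ → List ℕ)
    (hS1 : ∀ i, 1 ≤ i → i ≤ n → S i = [i])
    (hSrec : ∀ m, n ≤ m → S (m + 1) = S m ++ S (m + 1 - n))
    (W : ℕ → ℕ)
    (hW : ∀ m, n ≤ m → S m = (List.range (S m).length).map W)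
    (j : ℕ) (hj : 1 ≤ j) :
    W (F (n * j) - 1) = n ∧
    ∀ u, 1 ≤ u → u ≤ n - 1 → W (F (n * j + u) - 1) = u := by
  have hn0 : 0 < n := by omega
  have letter_at : ∀ m, n ≤ m → W (F m - 1) = (m - 1) % n + 1 := by
    intro m hm
    rw [← length_nString_eq hn0 hF1 hFrec hS1 hSrec m (by omega)]
    exact apply_length_sub_one_of_getLast?_eq (hW m hm)
      (getLast?_nString_eq hn0 hS1 hSrec m (by omega))
  have hnj : n ≤ n * j := Nat.le_mul_of_pos_right n hj
  refine ⟨?_, fun u hu1 hun => ?_⟩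
  · rw [letter_at (n * j) hnj, mul_sub_one_mod_add_one hn0 hj]
  · rw [letter_at (n * j + u) (by omega), mul_add_sub_one_mod_add_one j hu1 (by omega)]
end

section
/- Let k ≥ n ≥ 3 and j ≥ n. Then the indices r for which the largest summand of the n-decomposition of q(r) is F_{n,k+j} (i.e., the largest index in the n-decomposition of q(r) equals k+j) are exactly those r with F_{n,j} + 1 ≤ r ≤ F_{n,j+1}. -/
/-!
Write `X` for `X_{n,k}`. Since `q` enumerates `X` increasingly, `q r < N` iff `r` is at most the
number of elements of `X` below `N`; and the largest summand of a decomposition of `x` is `F (k+j)`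
iff `F (k+j) ≤ x < F (k+j+1)`. So it suffices that `C i := #{x ∈ X | x < F (k+i)}` equals `F i`
for `i ≥ 1`. For `i ≤ n` the only such `x` is `F k`, since a second summand is at least
`F (k+n)`. For `m ≥ n`, the elements of `X` in `[F (k+m), F (k+m+1))` are exactly the
`F (k+m) + y` with `y ∈ X` and `y < F (k+m+1-n)` (append or remove the top index `k+m`),
so `C` satisfies the recurrence of `F` and hence agrees with it.
-/

/-- `L` encodes an `n`-decomposition of `x`: indices at least `n`, consecutive
gaps at least `n`, summing (via `F`) to `x`. -/
def IsDecompOf (n : ℕ) (F : ℕ → ℕ) (L : List ℕ) (x : ℕ) : Prop :=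
  (∀ c ∈ L, n ≤ c) ∧ L.Chain' (fun a b => a + n ≤ b) ∧ (L.map F).sum = x

/-- `x` is a positive integer whose `n`-decomposition has `F k` as its
smallest summand (i.e. `k` is the smallest index used). -/
def MemXnk (n k : ℕ) (F : ℕ → ℕ) (x : ℕ) : Prop :=
  0 < x ∧ ∃ L : List ℕ, IsDecompOf n F L x ∧ k ∈ L ∧ ∀ c ∈ L, k ≤ c

/-- `F` agrees with `F_{n,·}` at every index `≥ 1`; `F 0` is left free. -/
structure IsGenFib_s13 (n : ℕ) (F : ℕ → ℕ) : Prop where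
  eq_one : ∀ i, 1 ≤ i → i ≤ n → F i = 1
  succ_eq : ∀ m, n ≤ m → F (m + 1) = F m + F (m + 1 - n)

namespace IsGenFib_s13

variable {n : ℕ} {F : ℕ → ℕ}

theorem pos (hF : IsGenFib_s13 n F) (hn : 0 < n) {i : ℕ} (hi : 1 ≤ i) : 0 < F i := by
  induction i using Nat.strong_induction_on with
  | _ i ih =>
    rcases le_or_gt i n with hin | hni
    · rw [hF.eq_one i hi hin]; exact one_pos
    · obtain ⟨m, rfl⟩ : ∃ m, i = m + 1 := ⟨i - 1, by omega⟩
      rw [hF.succ_eq m (by omega)]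
      exact Nat.add_pos_right _ (ih _ (by omega) (by omega))

theorem lt_succ (hF : IsGenFib_s13 n F) (hn : 0 < n) {m : ℕ} (hm : n ≤ m) : F m < F (m + 1) := by
  rw [hF.succ_eq m hm]
  exact Nat.lt_add_of_pos_right (hF.pos hn (by omega))

theorem strictMonoOn (hF : IsGenFib_s13 n F) (hn : 0 < n) : StrictMonoOn F (Set.Ici n) := by
  intro a ha b _ hab
  induction b, hab using Nat.le_induction with
  | base => exact hF.lt_succ hn ha
  | succ b hb ih =>
    exact (ih (by simp at ha ⊢; omega)).trans (hF.lt_succ hn (by simp at ha; omega))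

theorem eq_of_isGenFib {G : ℕ → ℕ} (hF : IsGenFib_s13 n F) (hG : IsGenFib_s13 n G) (hn : 0 < n)
    {i : ℕ} (hi : 1 ≤ i) : G i = F i := by
  induction i using Nat.strong_induction_on with
  | _ i ih =>
    rcases le_or_gt i n with hin | hni
    · rw [hF.eq_one i hi hin, hG.eq_one i hi hin]
    · obtain ⟨m, rfl⟩ : ∃ m, i = m + 1 := ⟨i - 1, by omega⟩
      rw [hF.succ_eq m (by omega), hG.succ_eq m (by omega), ih m (by omega) (by omega),
        ih (m + 1 - n) (by omega) (by omega)]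

end IsGenFib_s13

theorem isDecompOf_iff {n : ℕ} {F : ℕ → ℕ} {L : List ℕ} {x : ℕ} :
    IsDecompOf n F L x ↔
      (∀ c ∈ L, n ≤ c) ∧ L.Pairwise (fun a b => a + n ≤ b) ∧ (L.map F).sum = x := by
  have : IsTrans ℕ (fun a b => a + n ≤ b) := ⟨fun _ _ _ hab hbc => by omega⟩
  exact and_congr_right' (and_congr_left' List.isChain_iff_pairwise)

namespace IsDecompOf

variable {n : ℕ} {F : ℕ → ℕ} {L : List ℕ} {x c t : ℕ}

theorem pairwise (h : IsDecompOf n F L x) : L.Pairwise (fun a b => a + n ≤ b) :=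
  (isDecompOf_iff.mp h).2.1

theorem le_of_mem (h : IsDecompOf n F L x) (hc : c ∈ L) : F c ≤ x :=
  h.2.2 ▸ List.single_le_sum (fun _ _ => Nat.zero_le _) _ (List.mem_map_of_mem hc)

theorem append_singleton_iff {y : ℕ} :
    IsDecompOf n F (L ++ [c]) (y + F c) ↔
      IsDecompOf n F L y ∧ n ≤ c ∧ ∀ a ∈ L, a + n ≤ c := by
  simp only [isDecompOf_iff, List.mem_append, List.mem_singleton, List.pairwise_append,
    List.pairwise_singleton, List.map_append, List.sum_append, List.map_cons, List.map_nil,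
    List.sum_singleton, Nat.add_right_cancel_iff, forall_eq, true_and, or_imp, forall_and]
  tauto


theorem exists_of_append_singleton (h : IsDecompOf n F (L ++ [c]) x) :
    ∃ y, x = y + F c ∧ IsDecompOf n F L y ∧ n ≤ c ∧ ∀ a ∈ L, a + n ≤ c := by
  obtain rfl : x = (L.map F).sum + F c := by rw [← h.2.2]; simp
  exact ⟨_, rfl, append_singleton_iff.mp h⟩

theorem lt_of_forall_le (hF : IsGenFib_s13 n F) (hn : 0 < n) (h : IsDecompOf n F L x)
    (hL : ∀ c ∈ L, c ≤ t) : x < F (t + 1) := by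
  induction L using List.reverseRecOn generalizing x t with
  | nil => simpa [← h.2.2] using hF.pos hn (Nat.le_add_left 1 t)
  | append_singleton L c ih =>
    obtain ⟨y, rfl, hy, hc, hLc⟩ := h.exists_of_append_singleton
    have hyc : y < F (c - n + 1) := ih hy fun a ha => by have := hLc a ha; omega
    have hct : c ≤ t := hL c (by simp)
    calc y + F c < F (c + 1 - n) + F c := by rw [show c + 1 - n = c - n + 1 by omega]; omega
      _ = F (c + 1) := by rw [hF.succ_eq c hc, add_comm]
      _ ≤ F (t + 1) := (hF.strictMonoOn hn).monotoneOn (by simp; omega) (by simp; omega)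
        (by omega)

theorem eq_of_append_singleton (hF : IsGenFib_s13 n F) (hn : 0 < n)
    (h : IsDecompOf n F (L ++ [c]) x) (ht : n ≤ t) (hlo : F t ≤ x) (hhi : x < F (t + 1)) :
    c = t := by
  obtain ⟨-, -, -, hc, hLc⟩ := h.exists_of_append_singleton
  have hcx : F c ≤ x := h.le_of_mem (by simp)
  have hxc : x < F (c + 1) := h.lt_of_forall_le hF hn fun a ha => by
    rcases List.mem_append.mp ha with ha | ha
    · have := hLc a ha; omega
    · simp_all
  have hmono := hF.strictMonoOn hn
  have : c < t + 1 := (hmono.lt_iff_lt hc (by simp; omega)).mp (by omega)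
  have : t < c + 1 := (hmono.lt_iff_lt ht (by simp; omega)).mp (by omega)
  omega

end IsDecompOf

section Decomposition

variable {n k : ℕ} {F : ℕ → ℕ}

theorem exists_isDecompOf_largest_eq_iff (hF : IsGenFib_s13 n F) (hn : 0 < n) {L : List ℕ}
    {x t : ℕ} (hL : IsDecompOf n F L x) (hx : 0 < x) (ht : n ≤ t) :
    (∃ L, IsDecompOf n F L x ∧ t ∈ L ∧ ∀ c ∈ L, c ≤ t) ↔ F t ≤ x ∧ x < F (t + 1) := by
  refine ⟨fun ⟨L, hL, htL, hle⟩ => ⟨hL.le_of_mem htL, hL.lt_of_forall_le hF hn hle⟩, ?_⟩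
  rintro ⟨hlo, hhi⟩
  obtain rfl | ⟨L, c, rfl⟩ := L.eq_nil_or_concat
  · simp [← hL.2.2] at hx
  rw [List.concat_eq_append] at hL
  obtain rfl := hL.eq_of_append_singleton hF hn ht hlo hhi
  obtain ⟨-, -, -, -, hLc⟩ := hL.exists_of_append_singleton
  refine ⟨_, hL, by simp, fun a ha => ?_⟩
  rcases List.mem_append.mp ha with ha | ha
  · have := hLc a ha; omega
  · simp_all

theorem memXnk_self (hF : IsGenFib_s13 n F) (hn : 0 < n) (hk : n ≤ k) : MemXnk n k F (F k) :=
  ⟨hF.pos hn (by omega), [k], ⟨by simpa, List.isChain_singleton k, by simp⟩, by simp, by simp⟩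

theorem MemXnk.eq_or_le (hF : IsGenFib_s13 n F) (hn : 0 < n) {x : ℕ} (hx : MemXnk n k F x) :
    x = F k ∨ F (k + n) ≤ x := by
  obtain ⟨-, L, hL, hkL, hmin⟩ := hx
  obtain _ | ⟨a, L⟩ := L
  · simp at hkL
  have hpw := List.pairwise_cons.mp hL.pairwise
  obtain rfl : a = k := by
    rcases List.mem_cons.mp hkL with rfl | hkL
    · rfl
    · have := hpw.1 k hkL; have := hmin a (by simp); omega
  obtain _ | ⟨b, L⟩ := L
  · left; simpa using hL.2.2.symm
  · right
    calc F (a + n) ≤ F b := (hF.strictMonoOn hn).monotoneOn (Nat.le_add_left n a)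
          (hL.1 b (by simp)) (hpw.1 b (by simp))
      _ ≤ x := hL.le_of_mem (by simp)

theorem memXnk_add_iff (hF : IsGenFib_s13 n F) (hn : 0 < n) {t y : ℕ} (ht : k + n ≤ t)
    (hy : y < F (t + 1 - n)) : MemXnk n k F (F t + y) ↔ MemXnk n k F y := by
  constructor
  · rintro ⟨-, L, hL, hkL, hmin⟩
    have hnk : n ≤ k := hL.1 k hkL
    obtain rfl | ⟨L, c, rfl⟩ := L.eq_nil_or_concat
    · simp at hkL
    rw [List.concat_eq_append] at hL hkL hmin
    have hhi : F t + y < F (t + 1) := by rw [hF.succ_eq t (by omega)]; omega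
    obtain rfl := hL.eq_of_append_singleton hF hn (by omega) (by omega) hhi
    obtain ⟨y', hy', hL', -, -⟩ := hL.exists_of_append_singleton
    obtain rfl : y' = y := by omega
    have hkL' : k ∈ L := by
      rcases List.mem_append.mp hkL with h | h
      · exact h
      · simp at h; omega
    exact ⟨(hF.pos hn (by omega)).trans_le (hL'.le_of_mem hkL'), L, hL', hkL',
      fun a ha => hmin a (List.mem_append_left _ ha)⟩
  · rintro ⟨hy0, L, hL, hkL, hmin⟩
    have hnk : n ≤ k := hL.1 k hkL
    have hLt : ∀ a ∈ L, a + n ≤ t := fun a ha => by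
      have := (hF.strictMonoOn hn).lt_iff_lt (hL.1 a ha) (show n ≤ t + 1 - n by omega) |>.mp
        ((hL.le_of_mem ha).trans_lt hy)
      omega
    have hL' : IsDecompOf n F (L ++ [t]) (y + F t) :=
      IsDecompOf.append_singleton_iff.mpr ⟨hL, by omega, hLt⟩
    refine ⟨by omega, L ++ [t], add_comm y (F t) ▸ hL', by simp [hkL], fun a ha => ?_⟩
    rcases List.mem_append.mp ha with ha | ha
    · exact hmin a ha
    · simp at ha; omega

end Decomposition

theorem lt_iff_le_count_of_enumerates {p : ℕ → Prop} [DecidablePred p] {q : ℕ → ℕ}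
    (hmem : ∀ r, 1 ≤ r → p (q r)) (hmono : ∀ r, 1 ≤ r → q r < q (r + 1))
    (hsurj : ∀ x, p x → ∃ r, 1 ≤ r ∧ q r = x) {r : ℕ} (hr : 1 ≤ r) (N : ℕ) :
    q r < N ↔ r ≤ Nat.count p N := by
  have hstrict : StrictMono fun s => q (s + 1) :=
    strictMono_nat_of_lt_succ fun s => hmono (s + 1) (by omega)
  have hinf : (Set.ofPred p).Infinite :=
    Set.infinite_of_injective_forall_mem hstrict.injective fun s => hmem (s + 1) (by omega)
  have hnth : q r = Nat.nth p (r - 1) := by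
    have hsurjOn : Set.SurjOn (fun s => q (s + 1)) Set.univ (Set.ofPred p) := fun x hx => by
      obtain ⟨s, hs, rfl⟩ := hsurj x hx
      exact ⟨s - 1, trivial, by simp only [Nat.sub_add_cancel hs]⟩
    have := Nat.eq_nth_of_strictMonoOn_of_mapsTo_of_surjOn (p := p) _
      (by simpa [hinf] using hsurjOn) (fun s _ => hmem (s + 1) (by omega))
      (hstrict.strictMonoOn _) (x := r - 1) (fun hf => absurd hf hinf)
    simpa [Nat.sub_add_cancel hr] using this
  rw [hnth, ← Nat.lt_nth_iff_count_lt hinf]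
  omega

section Counting

variable {n k : ℕ} {F : ℕ → ℕ} [DecidablePred (MemXnk n k F)]

theorem count_memXnk_eq_one (hF : IsGenFib_s13 n F) (hn : 0 < n) (hk : n ≤ k) {i : ℕ}
    (hi : 1 ≤ i) (hin : i ≤ n) : Nat.count (MemXnk n k F) (F (k + i)) = 1 := by
  have hmono := hF.strictMonoOn hn
  rw [Nat.count_eq_card_filter_range, Finset.card_eq_one]
  refine ⟨F k, Finset.ext fun x => ?_⟩
  simp only [Finset.mem_filter, Finset.mem_range, Finset.mem_singleton]
  constructor
  · rintro ⟨hxi, hx⟩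
    refine (hx.eq_or_le hF hn).resolve_right fun hle => ?_
    have : F (k + i) ≤ F (k + n) := hmono.monotoneOn (by simp; omega) (by simp) (by omega)
    omega
  · rintro rfl
    exact ⟨hmono hk (by simp; omega) (by omega), memXnk_self hF hn hk⟩

theorem count_memXnk_F_add (hF : IsGenFib_s13 n F) (hn : 0 < n) (hk : n ≤ k) {i : ℕ}
    (hi : 1 ≤ i) : Nat.count (MemXnk n k F) (F (k + i)) = F i := by
  refine hF.eq_of_isGenFib (G := fun i => Nat.count (MemXnk n k F) (F (k + i)))
    ⟨fun i hi hin => count_memXnk_eq_one hF hn hk hi hin, fun m hm => ?_⟩ hn hi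
  have hshift : Nat.count (fun y => MemXnk n k F (F (k + m) + y)) (F (k + m + 1 - n)) =
      Nat.count (MemXnk n k F) (F (k + m + 1 - n)) := by
    simp only [Nat.count_eq_card_filter_range]
    exact congrArg _ <| Finset.filter_congr fun y hy =>
      memXnk_add_iff hF hn (by omega) (Finset.mem_range.mp hy)
  rw [← add_assoc, hF.succ_eq (k + m) (by omega), Nat.count_add, hshift,
    show k + (m + 1 - n) = k + m + 1 - n by omega]

end Counting

/-- Let `k ≥ n ≥ 3` and `j ≥ n`, and let `q 1 < q 2 < ⋯` be the increasing
enumeration of the set `X_{n,k}` of positive integers whose `n`-decomposition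
has `F k` as smallest summand.  Then the indices `r` for which the largest
summand of the `n`-decomposition of `q r` is `F (k+j)` are exactly those with
`F j + 1 ≤ r ≤ F (j+1)`. -/
theorem rows_with_largest_summand (n k : ℕ) (hn : 3 ≤ n) (hk : n ≤ k)
    (F : ℕ → ℕ)
    (hF1 : ∀ i, 1 ≤ i → i ≤ n → F i = 1)
    (hFrec : ∀ m, n ≤ m → F (m + 1) = F m + F (m + 1 - n))
    (q : ℕ → ℕ)
    (hq_mem : ∀ r, 1 ≤ r → MemXnk n k F (q r))
    (hq_mono : ∀ r, 1 ≤ r → q r < q (r + 1))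
    (hq_surj : ∀ x, MemXnk n k F x → ∃ r, 1 ≤ r ∧ q r = x)
    (j : ℕ) (hj : n ≤ j) :
    ∀ r, 1 ≤ r →
      ((∃ L : List ℕ, IsDecompOf n F L (q r) ∧ (k + j) ∈ L ∧ ∀ c ∈ L, c ≤ k + j)
        ↔ (F j + 1 ≤ r ∧ r ≤ F (j + 1))) := by
  classical
  intro r hr
  have hF : IsGenFib_s13 n F := ⟨hF1, hFrec⟩
  have hn_pos : 0 < n := by omega
  have hq_lt_iff := lt_iff_le_count_of_enumerates hq_mem hq_mono hq_surj hr
  obtain ⟨hpos, L, hL, -⟩ := hq_mem r hr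
  rw [exists_isDecompOf_largest_eq_iff hF hn_pos hL hpos (by omega), ← not_lt, hq_lt_iff,
    hq_lt_iff, add_assoc, count_memXnk_F_add hF hn_pos hk (by omega),
    count_memXnk_F_add hF hn_pos hk (by omega)]
  omega
end

section
/- Let k ≥ n ≥ 3 and j ≥ 1. If the jth letter of S_∞ is a_i (for some 1 ≤ i ≤ n), then q(j+1) - q(j) = F_{n,k+i}. -/
/-- `F` is `F_{n,·}` on positive indices; `F 0` is left unconstrained. -/
structure IsNFib (n : ℕ) (F : ℕ → ℕ) : Prop where
  pos : 0 < n
  eq_one : ∀ i, 1 ≤ i → i ≤ n → F i = 1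
  succ : ∀ m, n ≤ m → F (m + 1) = F m + F (m + 1 - n)

namespace IsNFib

variable {n : ℕ} {F : ℕ → ℕ}

theorem mono (hF : IsNFib n F) {a b : ℕ} (ha : 1 ≤ a) (hab : a ≤ b) : F a ≤ F b := by
  induction b, hab using Nat.le_induction with
  | base => rfl
  | succ b hab ih =>
    rcases le_or_gt n b with h | h
    · rw [hF.succ b h]; omega
    · rw [hF.eq_one a ha (by omega), hF.eq_one (b + 1) (by omega) (by omega)]

theorem one_le (hF : IsNFib n F) {m : ℕ} (hm : 1 ≤ m) : 1 ≤ F m :=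
  hF.eq_one 1 le_rfl hF.pos ▸ hF.mono le_rfl hm

theorem lt_of_apply_lt (hF : IsNFib n F) {a b : ℕ} (hb : 1 ≤ b) (h : F a < F b) : a < b := by
  by_contra! hba
  exact (hF.mono hb hba).not_gt h

theorem lt_apply_add (hF : IsNFib n F) (x : ℕ) : x < F (x + n) := by
  induction x with
  | zero => simp [hF.eq_one n hF.pos le_rfl]
  | succ x ih =>
    rw [show x + 1 + n = x + n + 1 by omega, hF.succ (x + n) (by omega),
      show x + n + 1 - n = x + 1 by omega]
    have := hF.one_le (m := x + 1) (by omega)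
    omega

end IsNFib

section Greedy

variable {n : ℕ} {F : ℕ → ℕ}

/-- The bound `x + n` is harmless since `x < F (x + n)`. -/
def topIndex (n : ℕ) (F : ℕ → ℕ) (x : ℕ) : ℕ :=
  Nat.findGreatest (fun m => F m ≤ x) (x + n)

theorem topIndex_spec (hF : IsNFib n F) {x : ℕ} (hx : 0 < x) :
    n ≤ topIndex n F x ∧ F (topIndex n F x) ≤ x ∧ x < F (topIndex n F x + 1) := by
  have hFn : F n ≤ x := by rw [hF.eq_one n hF.pos le_rfl]; exact hx
  have hspec := Nat.findGreatest_spec (P := fun m => F m ≤ x) (show n ≤ x + n by omega) hFn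
  refine ⟨Nat.le_findGreatest (m := n) (by omega) hFn, hspec, ?_⟩
  rcases (Nat.findGreatest_le (P := fun m => F m ≤ x) (x + n)).lt_or_eq with hlt | heq
  · exact not_le.1 (Nat.findGreatest_is_greatest (P := fun m => F m ≤ x) (Nat.lt_succ_self _) hlt)
  · rw [heq] at hspec
    exact absurd (hF.lt_apply_add x) hspec.not_gt

def greedyDecomp (n : ℕ) (F : ℕ → ℕ) : ℕ → List ℕ
  | 0 => []
  | x + 1 =>
    if _h : 0 < F (topIndex n F (x + 1)) then
      greedyDecomp n F (x + 1 - F (topIndex n F (x + 1))) ++ [topIndex n F (x + 1)]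
    else []
  decreasing_by omega

theorem greedyDecomp_zero : greedyDecomp n F 0 = [] := by
  simp [greedyDecomp]

theorem greedyDecomp_of_le_of_lt (hF : IsNFib n F) {x g : ℕ} (hg : n ≤ g) (hle : F g ≤ x)
    (hlt : x < F (g + 1)) : greedyDecomp n F x = greedyDecomp n F (x - F g) ++ [g] := by
  have hFg := hF.one_le (m := g) (by have := hF.pos; omega)
  obtain ⟨y, rfl⟩ : ∃ y, x = y + 1 := ⟨x - 1, by omega⟩
  obtain ⟨hg', hle', hlt'⟩ := topIndex_spec hF (x := y + 1) (by omega)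
  have htop : topIndex n F (y + 1) = g := by
    have := hF.lt_of_apply_lt (by omega) (hle'.trans_lt hlt)
    have := hF.lt_of_apply_lt (by omega) (hle.trans_lt hlt')
    omega
  rw [greedyDecomp, dif_pos (htop ▸ hFg), htop]

end Greedy

section Decomp

variable {n : ℕ} {F : ℕ → ℕ}

theorem isDecompOf_iff_pairwise {L : List ℕ} {x : ℕ} :
    IsDecompOf n F L x ↔
      (∀ c ∈ L, n ≤ c) ∧ L.Pairwise (fun a b => a + n ≤ b) ∧ (L.map F).sum = x := by
  have : Trans (fun a b : ℕ => a + n ≤ b) (fun a b => a + n ≤ b) (fun a b => a + n ≤ b) :=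
    ⟨fun hab hbc => by omega⟩
  rw [IsDecompOf, List.Chain', List.isChain_iff_pairwise]

theorem isDecompOf_nil_iff {x : ℕ} : IsDecompOf n F [] x ↔ x = 0 := by
  simp [isDecompOf_iff_pairwise, eq_comm]

theorem isDecompOf_append_singleton_iff {L : List ℕ} {g x : ℕ} :
    IsDecompOf n F (L ++ [g]) x ↔
      IsDecompOf n F L (x - F g) ∧ n ≤ g ∧ F g ≤ x ∧ ∀ c ∈ L, c + n ≤ g := by
  simp only [isDecompOf_iff_pairwise, List.pairwise_append, List.mem_append, List.mem_singleton,
    List.map_append, List.sum_append, List.map_cons, List.map_nil, List.sum_cons, List.sum_nil,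
    List.pairwise_singleton, forall_eq, true_and]
  constructor
  · rintro ⟨hn, ⟨hp, hgap⟩, hs⟩
    exact ⟨⟨fun c hc => hn c (.inl hc), hp, by omega⟩, hn g (.inr rfl), by omega, hgap⟩
  · rintro ⟨⟨hn, hp, hs⟩, hg, hle, hgap⟩
    exact ⟨fun c hc => hc.elim (hn c) (· ▸ hg), ⟨hp, hgap⟩, by omega⟩

theorem IsDecompOf.apply_le {L : List ℕ} {x c : ℕ} (h : IsDecompOf n F L x) (hc : c ∈ L) :
    F c ≤ x :=
  h.2.2 ▸ List.le_sum_of_mem (List.mem_map_of_mem hc)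

theorem IsDecompOf.lt_add (hF : IsNFib n F) {L : List ℕ} {x c : ℕ} (h : IsDecompOf n F L x)
    (hc : c ∈ L) : c < x + n :=
  hF.lt_of_apply_lt (by have := hF.pos; omega) ((h.apply_le hc).trans_lt (hF.lt_apply_add x))

theorem IsDecompOf.lt_apply (hF : IsNFib n F) {L : List ℕ} {x m : ℕ} (h : IsDecompOf n F L x)
    (hm : 1 ≤ m) (hL : ∀ c ∈ L, c < m) : x < F m := by
  induction L using List.reverseRecOn generalizing x m with
  | nil => rw [isDecompOf_nil_iff.1 h]; exact hF.one_le hm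
  | append_singleton L g ih =>
    obtain ⟨hL', hg, hle, hgap⟩ := isDecompOf_append_singleton_iff.1 h
    have hgm : g < m := hL g (by simp)
    have := ih hL' (m := g + 1 - n) (by omega) fun c hc => by have := hgap c hc; omega
    have := hF.mono (a := g + 1) (by omega) hgm
    rw [hF.succ g hg] at this
    omega

theorem IsDecompOf.eq_greedyDecomp (hF : IsNFib n F) {L : List ℕ} {x : ℕ}
    (h : IsDecompOf n F L x) : L = greedyDecomp n F x := by
  induction L using List.reverseRecOn generalizing x with
  | nil => rw [isDecompOf_nil_iff.1 h, greedyDecomp_zero]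
  | append_singleton L g ih =>
    obtain ⟨hL', hg, hle, hgap⟩ := isDecompOf_append_singleton_iff.1 h
    have hlt := hL'.lt_apply hF (m := g + 1 - n) (by omega) fun c hc => by
      have := hgap c hc; omega
    rw [greedyDecomp_of_le_of_lt hF hg hle (by rw [hF.succ g hg]; omega), ← ih hL']

theorem isDecompOf_greedyDecomp (hF : IsNFib n F) (x : ℕ) :
    IsDecompOf n F (greedyDecomp n F x) x := by
  induction x using Nat.strong_induction_on with
  | _ x ih =>
    rcases Nat.eq_zero_or_pos x with rfl | hx
    · rw [greedyDecomp_zero, isDecompOf_nil_iff]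
    obtain ⟨hg, hle, hlt⟩ := topIndex_spec hF hx
    generalize topIndex n F x = g at hg hle hlt
    have hFg := hF.one_le (m := g) (by have := hF.pos; omega)
    have hrest := ih (x - F g) (by omega)
    rw [greedyDecomp_of_le_of_lt hF hg hle hlt, isDecompOf_append_singleton_iff]
    refine ⟨hrest, hg, hle, fun c hc => ?_⟩
    have := hF.lt_of_apply_lt (b := g + 1 - n) (by omega) <| (hrest.apply_le hc).trans_lt <| by
      rw [hF.succ g hg] at hlt; omega
    omega

theorem greedyDecomp_ne_nil (hF : IsNFib n F) {x : ℕ} (hx : 0 < x) : greedyDecomp n F x ≠ [] :=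
  fun h => by
    have := isDecompOf_greedyDecomp hF x
    rw [h, isDecompOf_nil_iff] at this
    omega

end Decomp

/-- Taken largest index first, so that for `G = S` it is a prefix of `S_∞`. -/
@[to_additive]
def decompProd {M : Type*} [Monoid M] (G : ℕ → M) (L : List ℕ) : M := (L.map G).reverse.prod

section DecompProd

variable {M : Type*} [Monoid M] {G : ℕ → M}

@[to_additive]
theorem decompProd_nil : decompProd G [] = 1 := rfl

@[to_additive]
theorem decompProd_append_singleton (L : List ℕ) (g : ℕ) :
    decompProd G (L ++ [g]) = G g * decompProd G L := by
  simp [decompProd]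

end DecompProd

theorem decompSum_eq_sum {M : Type*} [AddCommMonoid M] (G : ℕ → M) (L : List ℕ) :
    decompSum G L = (L.map G).sum :=
  List.sum_reverse _

def residue (n c : ℕ) : ℕ := (c - 1) % n + 1

theorem residue_of_le {n c : ℕ} (h1 : 1 ≤ c) (h2 : c ≤ n) : residue n c = c := by
  rw [residue, Nat.mod_eq_of_lt (by omega)]; omega

theorem residue_sub {n c : ℕ} (h : n < c) : residue n (c - n) = residue n c := by
  rw [residue, residue, Nat.mod_eq_sub_mod (a := c - 1) (by omega),
    show c - 1 - n = c - n - 1 by omega]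

theorem residue_mem_Icc {n : ℕ} (hn : 0 < n) (c : ℕ) : residue n c ∈ Set.Icc 1 n :=
  ⟨by simp [residue], Nat.mod_lt _ hn⟩

section Gap

variable {n : ℕ} {F : ℕ → ℕ} {M : Type*} [Monoid M] {G : ℕ → M}

@[to_additive]
theorem decompProd_greedyDecomp_apply_sub_one_mul (hF : IsNFib n F)
    (hG : ∀ m, n ≤ m → G (m + 1) = G m * G (m + 1 - n)) {m : ℕ} (hm : 1 ≤ m) :
    decompProd G (greedyDecomp n F (F m - 1)) * G (residue n m) = G m := by
  induction m using Nat.strong_induction_on with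
  | _ m ih =>
    rcases le_or_gt m n with h | h
    · rw [hF.eq_one m hm h, Nat.sub_self, greedyDecomp_zero, decompProd_nil, one_mul,
        residue_of_le hm h]
    obtain ⟨t, rfl⟩ : ∃ t, m = t + 1 := ⟨m - 1, by omega⟩
    have hrec := hF.succ t (by omega)
    have := hF.pos
    have hpos := hF.one_le (m := t + 1 - n) (by omega)
    rw [greedyDecomp_of_le_of_lt hF (g := t) (by omega) (by omega) (by omega),
      show F (t + 1) - 1 - F t = F (t + 1 - n) - 1 by omega, decompProd_append_singleton,
      mul_assoc, ← residue_sub h, ih (t + 1 - n) (by omega) (by omega), hG t (by omega)]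

@[to_additive]
theorem decompProd_greedyDecomp_succ (hF : IsNFib n F)
    (hG : ∀ m, n ≤ m → G (m + 1) = G m * G (m + 1 - n)) {j c : ℕ}
    (hc : c ∈ (greedyDecomp n F (j + 1)).head?) :
    decompProd G (greedyDecomp n F (j + 1)) =
      decompProd G (greedyDecomp n F j) * G (residue n c) := by
  induction j using Nat.strong_induction_on generalizing c with
  | _ j ih =>
    obtain ⟨hg, hle, hlt⟩ := topIndex_spec hF (x := j + 1) (by omega)
    generalize topIndex n F (j + 1) = g at hg hle hlt
    have hFg := hF.one_le (m := g) (by have := hF.pos; omega)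
    have hsplit := greedyDecomp_of_le_of_lt hF hg hle hlt
    rcases hle.lt_or_eq with hlt' | heq
    · obtain ⟨j', hj'⟩ : ∃ j', j + 1 - F g = j' + 1 := ⟨j - F g, by omega⟩
      obtain ⟨a, l, hal⟩ :=
        List.exists_cons_of_ne_nil (greedyDecomp_ne_nil hF (x := j' + 1) (by omega))
      rw [hsplit, hj', hal] at hc
      have hac : a = c := by simpa using hc
      subst hac
      rw [hsplit, greedyDecomp_of_le_of_lt hF hg (x := j) (by omega) (by omega), hj',
        show j - F g = j' by omega, decompProd_append_singleton, decompProd_append_singleton,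
        ih j' (by omega) (c := a) (by simp [hal]), mul_assoc]
    · rw [hsplit, ← heq, Nat.sub_self, greedyDecomp_zero] at hc
      have hgc : g = c := by simpa using hc
      subst hgc
      rw [hsplit, ← heq, Nat.sub_self, greedyDecomp_zero, List.nil_append,
        show j = F g - 1 by omega,
        decompProd_greedyDecomp_apply_sub_one_mul hF hG (m := g) (by have := hF.pos; omega)]
      simp [decompProd]

end Gap

def enumXnk (n k : ℕ) (F : ℕ → ℕ) (r : ℕ) : ℕ :=
  F k + decompSum (fun c => F (k + c)) (greedyDecomp n F r)

section Enum

variable {n k : ℕ} {F : ℕ → ℕ}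

theorem enumXnk_succ (hF : IsNFib n F) {j c : ℕ} (hc : c ∈ (greedyDecomp n F (j + 1)).head?) :
    enumXnk n k F (j + 1) = enumXnk n k F j + F (k + residue n c) := by
  have hG : ∀ m, n ≤ m → F (k + (m + 1)) = F (k + m) + F (k + (m + 1 - n)) := fun m hm => by
    rw [← Nat.add_assoc, hF.succ (k + m) (by omega),
      show k + m + 1 - n = k + (m + 1 - n) by omega]
  rw [enumXnk, enumXnk, decompSum_greedyDecomp_succ hF hG hc, add_assoc]

theorem strictMono_enumXnk (hF : IsNFib n F) : StrictMono (enumXnk n k F) := by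
  refine strictMono_nat_of_lt_succ fun j => ?_
  obtain ⟨c, l, hcl⟩ := List.exists_cons_of_ne_nil (greedyDecomp_ne_nil hF j.succ_pos)
  rw [enumXnk_succ hF (c := c) (by simp [hcl])]
  have := hF.one_le (m := k + residue n c) (by unfold residue; omega)
  omega

theorem isDecompOf_cons_map_add (hk : n ≤ k) {T : List ℕ} {y : ℕ} (h : IsDecompOf n F T y) :
    IsDecompOf n F (k :: T.map (k + ·)) (F k + decompSum (fun c => F (k + c)) T) := by
  obtain ⟨hge, hpw, -⟩ := isDecompOf_iff_pairwise.1 h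
  refine isDecompOf_iff_pairwise.2 ⟨?_, ?_, ?_⟩
  · simpa using ⟨hk, fun c hc => by have := hge c hc; omega⟩
  · refine List.pairwise_cons.2 ⟨?_, List.pairwise_map.2 (hpw.imp fun hab => by omega)⟩
    simpa using fun c hc => hge c hc
  · simp [decompSum_eq_sum, Function.comp_def]

theorem eq_cons_of_mem_of_forall_le {L : List ℕ} {k : ℕ} (hn : 0 < n)
    (hpw : L.Pairwise (fun a b => a + n ≤ b)) (hkL : k ∈ L) (hmin : ∀ c ∈ L, k ≤ c) :
    ∃ t, L = k :: t := by
  cases L with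
  | nil => simp at hkL
  | cons a t =>
    refine ⟨t, ?_⟩
    rcases List.mem_cons.1 hkL with rfl | hkt
    · rfl
    · have := List.rel_of_pairwise_cons hpw hkt
      have := hmin a (by simp)
      omega

theorem memXnk_iff (hF : IsNFib n F) (hk : n ≤ k) {x : ℕ} :
    MemXnk n k F x ↔
      ∃ T y, IsDecompOf n F T y ∧ x = F k + decompSum (fun c => F (k + c)) T := by
  constructor
  · rintro ⟨-, L, hL, hkL, hmin⟩
    obtain ⟨hge, hpw, hsum⟩ := isDecompOf_iff_pairwise.1 hL
    obtain ⟨t, rfl⟩ := eq_cons_of_mem_of_forall_le hF.pos hpw hkL hmin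
    have ht : ∀ c ∈ t, k + n ≤ c := fun c hc => List.rel_of_pairwise_cons hpw hc
    refine ⟨t.map (· - k), _, isDecompOf_iff_pairwise.2 ⟨?_, ?_, rfl⟩, ?_⟩
    · simpa using fun c hc => by have := ht c hc; omega
    · refine List.pairwise_map.2 ((List.pairwise_cons.1 hpw).2.imp_of_mem fun ha hb hab => ?_)
      have := ht _ ha
      omega
    · rw [← hsum, decompSum_eq_sum, List.map_cons, List.sum_cons, List.map_map]
      congr 2
      exact List.map_congr_left fun c hc => by
        rw [Function.comp_apply, Nat.add_sub_cancel' (by have := ht c hc; omega)]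
  · rintro ⟨T, y, hT, rfl⟩
    exact ⟨by have := hF.one_le (m := k) (by have := hF.pos; omega); omega,
      _, isDecompOf_cons_map_add hk hT, by simp, by simp⟩

theorem range_enumXnk (hF : IsNFib n F) (hk : n ≤ k) :
    Set.range (enumXnk n k F) = {x | MemXnk n k F x} := by
  ext x
  simp only [Set.mem_range, Set.mem_ofPred_eq, memXnk_iff hF hk]
  constructor
  · rintro ⟨r, rfl⟩
    exact ⟨_, r, isDecompOf_greedyDecomp hF r, rfl⟩
  · rintro ⟨T, y, hT, rfl⟩
    exact ⟨y, by rw [enumXnk, ← hT.eq_greedyDecomp hF]⟩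

theorem eq_enumXnk (hF : IsNFib n F) (hk : n ≤ k) {q : ℕ → ℕ}
    (hq_mem : ∀ r, 1 ≤ r → MemXnk n k F (q r))
    (hq_mono : ∀ r, 1 ≤ r → q r < q (r + 1))
    (hq_surj : ∀ x, MemXnk n k F x → ∃ r, 1 ≤ r ∧ q r = x) (r : ℕ) :
    q (r + 1) = enumXnk n k F r := by
  have hmono : StrictMono fun r => q (r + 1) :=
    strictMono_nat_of_lt_succ fun r => hq_mono (r + 1) (by omega)
  have hrange : Set.range (fun r => q (r + 1)) = Set.range (enumXnk n k F) := by
    rw [range_enumXnk hF hk]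
    ext x
    refine ⟨?_, fun hx => ?_⟩
    · rintro ⟨r, rfl⟩
      exact hq_mem (r + 1) (by omega)
    · obtain ⟨s, hs, rfl⟩ := hq_surj x hx
      exact ⟨s - 1, by simp only [Nat.sub_add_cancel hs]⟩
  exact congrFun ((hmono.range_inj (strictMono_enumXnk hF)).1 hrange) r

end Enum

def decompWord (S : ℕ → List ℕ) (L : List ℕ) : List ℕ :=
  FreeMonoid.toList (decompProd (fun c => FreeMonoid.ofList (S c)) L)

section Letter

variable {n : ℕ} {F : ℕ → ℕ} {S : ℕ → List ℕ}

theorem string_prefix_of_le (hSrec : ∀ m, n ≤ m → S (m + 1) = S m ++ S (m + 1 - n)) {a b : ℕ}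
    (ha : n ≤ a) (hab : a ≤ b) : S a <+: S b := by
  induction b, hab using Nat.le_induction with
  | base => exact List.prefix_refl _
  | succ b hab ih => exact ih.trans (hSrec b (by omega) ▸ List.prefix_append _ _)

theorem decompWord_prefix (hSrec : ∀ m, n ≤ m → S (m + 1) = S m ++ S (m + 1 - n))
    {L : List ℕ} {x m : ℕ} (h : IsDecompOf n F L x) (hL : ∀ c ∈ L, c < m) :
    decompWord S L <+: S m := by
  induction L using List.reverseRecOn generalizing x m with
  | nil => exact List.nil_prefix
  | append_singleton L g ih =>
    obtain ⟨hL', hg, -, hgap⟩ := isDecompOf_append_singleton_iff.1 h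
    have hgm : g < m := hL g (by simp)
    have hpre : decompWord S L <+: S (g + 1 - n) := ih hL' fun c hc => by
      have := hgap c hc; omega
    rw [decompWord, decompProd_append_singleton, FreeMonoid.toList_mul,
      FreeMonoid.toList_ofList]
    refine ((List.prefix_append_right_inj _).2 hpre).trans ?_
    rw [← hSrec g hg]
    exact string_prefix_of_le hSrec (by omega) hgm

theorem decompWord_greedyDecomp_succ (hF : IsNFib n F) (hS1 : ∀ i, 1 ≤ i → i ≤ n → S i = [i])
    (hSrec : ∀ m, n ≤ m → S (m + 1) = S m ++ S (m + 1 - n)) {j c : ℕ}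
    (hc : c ∈ (greedyDecomp n F (j + 1)).head?) :
    decompWord S (greedyDecomp n F (j + 1)) =
      decompWord S (greedyDecomp n F j) ++ [residue n c] := by
  have hG : ∀ m, n ≤ m → FreeMonoid.ofList (S (m + 1)) =
      FreeMonoid.ofList (S m) * FreeMonoid.ofList (S (m + 1 - n)) := fun m hm => by
    rw [hSrec m hm, FreeMonoid.ofList_append]
  obtain ⟨h1, h2⟩ := residue_mem_Icc hF.pos c
  rw [decompWord, decompProd_greedyDecomp_succ (G := fun c => FreeMonoid.ofList (S c)) hF hG hc,
    FreeMonoid.toList_mul, FreeMonoid.toList_ofList, hS1 _ h1 h2, decompWord]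

theorem length_decompWord_greedyDecomp (hF : IsNFib n F) (hS1 : ∀ i, 1 ≤ i → i ≤ n → S i = [i])
    (hSrec : ∀ m, n ≤ m → S (m + 1) = S m ++ S (m + 1 - n)) (j : ℕ) :
    (decompWord S (greedyDecomp n F j)).length = j := by
  induction j with
  | zero =>
    rw [greedyDecomp_zero, decompWord, decompProd_nil, FreeMonoid.toList_one, List.length_nil]
  | succ j ih =>
    obtain ⟨c, l, hcl⟩ := List.exists_cons_of_ne_nil (greedyDecomp_ne_nil hF j.succ_pos)
    rw [decompWord_greedyDecomp_succ hF hS1 hSrec (c := c) (by simp [hcl]), List.length_append,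
      ih, List.length_singleton]

theorem letter_eq_residue (hF : IsNFib n F) (hS1 : ∀ i, 1 ≤ i → i ≤ n → S i = [i])
    (hSrec : ∀ m, n ≤ m → S (m + 1) = S m ++ S (m + 1 - n)) {W : ℕ → ℕ}
    (hW : ∀ m, n ≤ m → S m = (List.range (S m).length).map W) {j c : ℕ}
    (hc : c ∈ (greedyDecomp n F (j + 1)).head?) : W j = residue n c := by
  have hdec := isDecompOf_greedyDecomp hF (j + 1)
  have hpre : decompWord S (greedyDecomp n F (j + 1)) <+: S (j + 1 + n) :=
    decompWord_prefix hSrec hdec fun c hc => hdec.lt_add hF hc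
  have hlen := length_decompWord_greedyDecomp hF hS1 hSrec j
  rw [decompWord_greedyDecomp_succ hF hS1 hSrec hc] at hpre
  have hj : j < (S (j + 1 + n)).length := by
    have := hpre.length_le
    simp only [List.length_append, hlen, List.length_singleton] at this
    omega
  have key := List.prefix_iff_getElem?.1 hpre j (by simp [hlen])
  rw [hW _ (by omega), List.getElem?_map, List.getElem?_range hj] at key
  simpa [List.getElem_append_right, hlen] using key

end Letter

theorem gap_of_q_given_letter_general (n k : ℕ) (hn : 3 ≤ n) (hk : n ≤ k)
    (F : ℕ → ℕ)
    (hF1 : ∀ i, 1 ≤ i → i ≤ n → F i = 1)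
    (hFrec : ∀ m, n ≤ m → F (m + 1) = F m + F (m + 1 - n))
    (S : ℕ → List ℕ)
    (hS1 : ∀ i, 1 ≤ i → i ≤ n → S i = [i])
    (hSrec : ∀ m, n ≤ m → S (m + 1) = S m ++ S (m + 1 - n))
    (W : ℕ → ℕ)
    (hW : ∀ m, n ≤ m → S m = (List.range (S m).length).map W)
    (q : ℕ → ℕ)
    (hq_mem : ∀ r, 1 ≤ r → MemXnk n k F (q r))
    (hq_mono : ∀ r, 1 ≤ r → q r < q (r + 1))
    (hq_surj : ∀ x, MemXnk n k F x → ∃ r, 1 ≤ r ∧ q r = x)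
    (j i : ℕ) (hj : 1 ≤ j)
    (hletter : W (j - 1) = i) :
    q (j + 1) = q j + F (k + i) := by
  have hF : IsNFib n F := ⟨by omega, hF1, hFrec⟩
  obtain ⟨j, rfl⟩ : ∃ j', j = j' + 1 := ⟨j - 1, by omega⟩
  obtain ⟨c, l, hcl⟩ := List.exists_cons_of_ne_nil (greedyDecomp_ne_nil hF j.succ_pos)
  have hc : c ∈ (greedyDecomp n F (j + 1)).head? := by simp [hcl]
  have hi : i = residue n c := hletter ▸ letter_eq_residue hF hS1 hSrec hW hc
  rw [eq_enumXnk hF hk hq_mem hq_mono hq_surj, eq_enumXnk hF hk hq_mem hq_mono hq_surj, hi]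
  exact enumXnk_succ hF hc

/-- Let `k ≥ n ≥ 3` and `j ≥ 1`, let `W = S_∞` be the infinite `n`-string
(1-indexed: the `j`-th letter is `W (j-1)`), and let `q 1 < q 2 < ⋯` enumerate
the positive integers whose `n`-decomposition has `F k` as smallest summand.
If the `j`-th letter of `S_∞` is `a_i` (with `1 ≤ i ≤ n`), then
`q (j+1) - q j = F (k+i)`. -/
theorem gap_of_q_given_letter (n k : ℕ) (hn : 3 ≤ n) (hk : n ≤ k)
    (F : ℕ → ℕ)
    (hF1 : ∀ i, 1 ≤ i → i ≤ n → F i = 1)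
    (hFrec : ∀ m, n ≤ m → F (m + 1) = F m + F (m + 1 - n))
    (S : ℕ → List ℕ)
    (hS1 : ∀ i, 1 ≤ i → i ≤ n → S i = [i])
    (hSrec : ∀ m, n ≤ m → S (m + 1) = S m ++ S (m + 1 - n))
    (W : ℕ → ℕ)
    (hW : ∀ m, n ≤ m → S m = (List.range (S m).length).map W)
    (q : ℕ → ℕ)
    (hq_mem : ∀ r, 1 ≤ r → MemXnk n k F (q r))
    (hq_mono : ∀ r, 1 ≤ r → q r < q (r + 1))
    (hq_surj : ∀ x, MemXnk n k F x → ∃ r, 1 ≤ r ∧ q r = x)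
    (j i : ℕ) (hj : 1 ≤ j) (hi1 : 1 ≤ i) (hi2 : i ≤ n)
    (hletter : W (j - 1) = i) :
    q (j + 1) = q j + F (k + i) :=
  gap_of_q_given_letter_general n k hn hk F hF1 hFrec S hS1 hSrec W hW q hq_mem hq_mono hq_surj j i
    hj hletter
end

section
/- Let n ≥ 3 and m ≥ 2n - 1. The string of letters of S_∞ in positions F_{n,m} + 1 through F_{n,m+1} (inclusive) is identical to the string of the first F_{n,m+1-n} letters of S_∞. -/
/-- Let `n ≥ 3` and `m ≥ 2n - 1`.  In the infinite `n`-string `W = S_∞`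
(0-indexed here: the `p`-th letter, 1-indexed, is `W (p-1)`), the string of
letters in positions `F m + 1` through `F (m+1)` (1-indexed, inclusive) is
identical to the string of the first `F (m+1-n)` letters; equivalently
`W (F m + t) = W t` for all `0 ≤ t < F (m+1-n)`
(note `F (m+1) - F m = F (m+1-n)`). -/
theorem block_repeats_prefix (n : ℕ) (hn : 3 ≤ n) (F : ℕ → ℕ)
    (hF1 : ∀ i, 1 ≤ i → i ≤ n → F i = 1)
    (hFrec : ∀ m, n ≤ m → F (m + 1) = F m + F (m + 1 - n))
    (S : ℕ → List ℕ)
    (hS1 : ∀ i, 1 ≤ i → i ≤ n → S i = [i])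
    (hSrec : ∀ m, n ≤ m → S (m + 1) = S m ++ S (m + 1 - n))
    (W : ℕ → ℕ)
    (hW : ∀ m, n ≤ m → S m = (List.range (S m).length).map W)
    (m : ℕ) (hm : 2 * n - 1 ≤ m) :
    ∀ t, t < F (m + 1 - n) → W (F m + t) = W t := by
  -- lengths equal F
  have hlen : ∀ k, 1 ≤ k → (S k).length = F k := by
    intro k
    induction k using Nat.strong_induction_on with
    | _ k ih =>
      intro hk1
      by_cases hkn : k ≤ n
      · rw [hS1 k hk1 hkn, hF1 k hk1 hkn]; rfl
      · push_neg at hkn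
        have hk : n ≤ k - 1 := by omega
        have h1 : k - 1 + 1 = k := by omega
        have h2 : k - 1 + 1 - n = k - n := by omega
        have hS := hSrec (k - 1) hk
        rw [h1] at hS
        have hF := hFrec (k - 1) hk
        rw [h1] at hF
        rw [hS, List.length_append, hF,
          ih (k - 1) (by omega) (by omega), ih (k - n) (by omega) (by omega)]
  intro t ht
  have hmn : n ≤ m := by omega
  have hm1n : n ≤ m + 1 - n := by omega
  -- key: entries of S k are W of index
  have hentry : ∀ k, n ≤ k → ∀ i (hi : i < (S k).length), (S k)[i] = W i := by
    intro k hk i hi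
    rw [List.getElem_of_eq (hW k hk) hi, List.getElem_map, List.getElem_range]
  have hFm : (S m).length = F m := hlen m (by omega)
  have hFmn : (S (m + 1 - n)).length = F (m + 1 - n) := hlen _ (by omega)
  have ht' : t < (S (m + 1 - n)).length := by omega
  have hlt : F m + t < (S (m + 1)).length := by
    rw [hlen (m + 1) (by omega), hFrec m hmn]; omega
  have h1 : (S (m + 1))[F m + t]'hlt = W (F m + t) := hentry (m + 1) (by omega) _ hlt
  have h2 : (S (m + 1 - n))[t]'ht' = W t := hentry (m + 1 - n) hm1n t ht'
  rw [← h1, ← h2]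
  have hS := hSrec m hmn
  have h3 : (S (m + 1))[F m + t]'hlt = (S (m + 1 - n))[t]'ht' := by
    simp only [hS]
    rw [List.getElem_append_right (by omega)]
    congr 1
    omega
  exact h3
end
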